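/- arXiv:1104.3158 — 9 statements merged into one kernel-verified Lean document; each statement's English description precedes it below -/
import Mathlib

section
/- For all integers k ≥ 2 and m ≥ 1, f(k,m) = m + Σ_{i=1}^{m-1} [ C(k(i+1) - 1, k) - C(ki, k) ]. -/
/-!
Put `G n = C(k n, k)`. Then `b k l = (1 - 1/l) Δˡ G 0`, and since
`C(k (i+1) - 1, k) = G (i+1) · i / (i+1)`, the summand on the right is `Δ G i - G (i+1) / (i+1)`.
Newton's forward-difference formula expands both `G m` and `∑_{i<m} G (i+1) / (i+1)` in the
binomials `C(m, l)`, the latter via `C(n, l) / (l+1) = C(n+1, l+1) / (n+1)` and the hockey-stick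
identity; their difference is `∑_l C(m, l) (1 - 1/l) Δˡ G 0`. As `G` is a polynomial of degree `k`,
`Δˡ G = 0` for `l > k`, so this is the sum defining `f k m - m`.
-/

open Finset

def b (k l : ℕ) : ℚ :=
  ((l - 1 : ℚ) / l) *
    ∑ i ∈ Finset.range l, (-1 : ℚ) ^ i * (l.choose i) * ((k * (l - i)).choose k)

def f (k m : ℕ) : ℚ := m + ∑ l ∈ Finset.Icc 2 k, b k l * (m.choose l)

open Polynomial fwdDiff

theorem sum_range_sum_choose_smul {M : Type*} [AddCommMonoid M] (a : ℕ → M) (m : ℕ) :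
    ∑ n ∈ range m, ∑ l ∈ range (n + 1), n.choose l • a l =
      ∑ l ∈ range m, m.choose (l + 1) • a l := by
  induction m with
  | zero => simp
  | succ m ih =>
    rw [sum_range_succ, ih]
    simp only [Nat.choose_succ_succ', add_smul, sum_add_distrib]
    rw [sum_range_succ (fun l => m.choose (l + 1) • a l), Nat.choose_succ_self, zero_smul,
      add_zero, add_comm]

theorem eq_sum_choose_fwdDiff_iter_succ {M : Type*} [AddCommGroup M] {G : ℕ → M} (hG : G 0 = 0)
    (m : ℕ) : G m = ∑ l ∈ range m, m.choose (l + 1) • Δ_[1] ^[l + 1] G 0 := by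
  have := shift_eq_sum_fwdDiff_iter 1 G m 0
  rw [sum_range_succ'] at this
  simpa [hG] using this

theorem sum_range_alternating_choose_eq_fwdDiff_iter {R : Type*} [CommRing R] (G : ℕ → R)
    (l : ℕ) : ∑ i ∈ range (l + 1), (-1) ^ i * l.choose i * G (l - i) = Δ_[1] ^[l] G 0 := by
  rw [fwdDiff_iter_eq_sum_shift, ← sum_range_reflect]
  refine sum_congr rfl fun i hi ↦ ?_
  have hi : i ≤ l := Nat.lt_succ_iff.mp (mem_range.mp hi)
  rw [add_tsub_cancel_right, Nat.sub_sub_self hi, Nat.choose_symm hi, zsmul_eq_mul]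
  simp

theorem fwdDiff_iter_eval_natCast_eq_zero {R : Type*} [CommRing R] {P : R[X]} {n : ℕ}
    (hP : P.natDegree < n) : Δ_[1] ^[n] (fun x : ℕ ↦ P.eval (x : R)) = 0 := by
  funext y
  simpa [fwdDiff_iter_eq_sum_shift] using congr_fun (fwdDiff_iter_eq_zero_of_degree_lt hP) y

section
variable {K : Type*} [Field K] [CharZero K]

theorem fwdDiff_iter_choose_mul_eq_zero (a k : ℕ) {n : ℕ} (hn : k < n) :
    Δ_[1] ^[n] (fun x : ℕ ↦ ((a * x).choose k : K)) = 0 := by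
  let P : K[X] := C (k.factorial : K)⁻¹ * (descPochhammer K k).comp (C (a : K) * X)
  have hP : ∀ x : ℕ, P.eval (x : K) = ((a * x).choose k : K) := by
    intro x
    have := descPochhammer_eval_eq_descFactorial K (a * x) k
    simp only [P, eval_mul, eval_C, eval_comp, eval_X]
    push_cast at this
    rw [this, Nat.descFactorial_eq_factorial_mul_choose, Nat.cast_mul,
      inv_mul_cancel_left₀ (Nat.cast_ne_zero.mpr k.factorial_ne_zero)]
  have hdeg : P.natDegree ≤ k :=
    calc P.natDegree ≤ ((descPochhammer K k).comp (C (a : K) * X)).natDegree :=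
          natDegree_C_mul_le _ _
      _ ≤ (descPochhammer K k).natDegree * (C (a : K) * X).natDegree := natDegree_comp_le
      _ ≤ k * 1 := by
        gcongr
        · rw [descPochhammer_natDegree]
        · exact (natDegree_C_mul_le _ _).trans natDegree_X_le
      _ = k := mul_one k
  simpa only [hP] using fwdDiff_iter_eval_natCast_eq_zero (hdeg.trans_lt hn)

theorem div_succ_eq_sum_choose_fwdDiff_iter {G : ℕ → K} (hG : G 0 = 0) (n : ℕ) :
    G (n + 1) / (n + 1) = ∑ l ∈ range (n + 1), n.choose l • (Δ_[1] ^[l + 1] G 0 / (l + 1)) := by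
  rw [eq_sum_choose_fwdDiff_iter_succ hG, sum_div]
  refine sum_congr rfl fun l _ ↦ ?_
  have h : ((n + 1 : ℕ) : K) * n.choose l = (n + 1).choose (l + 1) * (l + 1 : ℕ) := by
    exact_mod_cast Nat.add_one_mul_choose_eq n l
  rw [nsmul_eq_mul, nsmul_eq_mul]
  push_cast at h
  field_simp
  linear_combination (-Δ_[1] ^[l + 1] G 0) * h

theorem sub_sum_range_div_succ_eq {G : ℕ → K} (hG : G 0 = 0) (m : ℕ) :
    G m - ∑ i ∈ range m, G (i + 1) / (i + 1) =
      ∑ l ∈ range m, m.choose (l + 1) * (l / (l + 1)) * Δ_[1] ^[l + 1] G 0 := by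
  rw [sum_congr rfl fun i _ ↦ div_succ_eq_sum_choose_fwdDiff_iter hG i, sum_range_sum_choose_smul,
    eq_sum_choose_fwdDiff_iter_succ hG m, ← sum_sub_distrib]
  refine sum_congr rfl fun l _ ↦ ?_
  rw [nsmul_eq_mul, nsmul_eq_mul]
  field_simp
  ring

theorem cast_choose_mul_succ_sub_one {k : ℕ} (hk : 0 < k) (i : ℕ) :
    ((k * (i + 1) - 1).choose k : K) = (k * (i + 1)).choose k * i / (i + 1) := by
  have h := Nat.choose_mul_succ_eq (k * (i + 1) - 1) k
  rw [Nat.sub_add_cancel (Nat.mul_pos hk i.succ_pos),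
    show k * (i + 1) - k = k * i by rw [mul_add_one, Nat.add_sub_cancel]] at h
  have h' : ((k * (i + 1) - 1).choose k : K) * (k * (i + 1)) =
      (k * (i + 1)).choose k * (k * i) := by
    exact_mod_cast h
  rw [eq_div_iff (Nat.cast_add_one_ne_zero i)]
  apply mul_left_cancel₀ (Nat.cast_ne_zero.mpr hk.ne' : (k : K) ≠ 0)
  linear_combination h'

end

theorem b_eq_fwdDiff_iter {k : ℕ} (hk : 0 < k) (l : ℕ) :
    b k l = ((l - 1) / l) * Δ_[1] ^[l] (fun n : ℕ ↦ ((k * n).choose k : ℚ)) 0 := by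
  rw [b, ← sum_range_alternating_choose_eq_fwdDiff_iter, sum_range_succ]
  simp [Nat.choose_eq_zero_of_lt hk]

theorem sum_Icc_b_mul_choose_eq {k : ℕ} (hk : 0 < k) (m : ℕ) :
    ∑ l ∈ Icc 2 k, b k l * m.choose l = ∑ l ∈ range m,
      m.choose (l + 1) * (l / (l + 1)) * Δ_[1] ^[l + 1] (fun n : ℕ ↦ ((k * n).choose k : ℚ)) 0 := by
  set c : ℕ → ℚ := fun l ↦
    m.choose l * ((l - 1) / l) * Δ_[1] ^[l] (fun n : ℕ ↦ ((k * n).choose k : ℚ)) 0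
  calc ∑ l ∈ Icc 2 k, b k l * m.choose l
      = ∑ l ∈ Icc 2 k, c l := sum_congr rfl fun l _ ↦ by rw [b_eq_fwdDiff_iter hk]; ring
    _ = ∑ l ∈ Ico 1 (m + 1), c l := by
      refine sum_congr_of_eq_on_inter (fun l hl hl' ↦ ?_) (fun l hl hl' ↦ ?_) fun _ _ _ ↦ rfl
      · simp only [mem_Icc, mem_Ico] at hl hl'
        simp [c, Nat.choose_eq_zero_of_lt (show m < l by omega)]
      · simp only [mem_Icc, mem_Ico] at hl hl'
        obtain rfl | hl : l = 1 ∨ k < l := by omega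
        · simp [c]
        · simp [c, fwdDiff_iter_choose_mul_eq_zero k k hl]
    _ = _ := by
      rw [range_eq_Ico]
      refine (sum_Ico_add' c 0 m 1).symm.trans (sum_congr rfl fun l _ ↦ ?_)
      simp [c]

theorem sum_range_choose_sub_choose_eq {k : ℕ} (hk : 0 < k) (m : ℕ) :
    ∑ i ∈ range m, (((k * (i + 1) - 1).choose k : ℚ) - (k * i).choose k) =
      (k * m).choose k - ∑ i ∈ range m, ((k * (i + 1)).choose k : ℚ) / (i + 1) := by
  have hterm : ∀ i : ℕ, ((k * (i + 1) - 1).choose k : ℚ) - (k * i).choose k =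
      ((k * (i + 1)).choose k - (k * i).choose k) - (k * (i + 1)).choose k / (i + 1) := by
    intro i
    rw [cast_choose_mul_succ_sub_one hk]
    field_simp
    ring
  rw [sum_congr rfl fun i _ ↦ hterm i, sum_sub_distrib,
    sum_range_sub (fun n ↦ ((k * n).choose k : ℚ))]
  simp [Nat.choose_eq_zero_of_lt hk]

theorem stmt_3_general (k m : ℕ) (hk : 2 ≤ k) :
    f k m = (m : ℚ) +
      ∑ i ∈ Finset.Icc 1 (m - 1),
        (((k * (i + 1) - 1).choose k : ℚ) - ((k * i).choose k : ℚ)) := by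
  have hk₀ : 0 < k := by omega
  have hG : (fun n : ℕ ↦ ((k * n).choose k : ℚ)) 0 = 0 := by simp [Nat.choose_eq_zero_of_lt hk₀]
  have hIcc : Icc 1 (m - 1) = (range m).erase 0 := by
    ext; simp only [mem_Icc, mem_erase, mem_range]; omega
  rw [f, hIcc, sum_erase _ (by simp [Nat.choose_eq_zero_of_lt hk₀,
    Nat.choose_eq_zero_of_lt (Nat.sub_one_lt hk₀.ne')]), sum_range_choose_sub_choose_eq hk₀,
    sum_Icc_b_mul_choose_eq hk₀]
  exact congrArg _ (sub_sum_range_div_succ_eq hG m).symm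

theorem stmt_3 (k m : ℕ) (hk : 2 ≤ k) (hm : 1 ≤ m) :
    f k m = (m : ℚ) +
      ∑ i ∈ Finset.Icc 1 (m - 1),
        (((k * (i + 1) - 1).choose k : ℚ) - ((k * i).choose k : ℚ)) :=
  stmt_3_general k m hk
end

section
/- Let k ≥ 2, 2 ≤ ℓ ≤ k, let M_1, …, M_ℓ be pairwise disjoint k-sets, and let a = (a_1 ≥ a_2 ≥ ⋯ ≥ a_ℓ ≥ 1) be a composition with a_1 + ⋯ + a_ℓ = k. Then there exists a covering of {M_1,…,M_ℓ} all of whose edges are of type a; i.e., there exist pairwise disjoint k-sets C_1, …, C_ℓ with ∪C_i = ∪M_i, such that for each i the multiset {|C_i ∩ M_1|, …, |C_i ∩ M_ℓ|} equals {a_1, …, a_ℓ}. -/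
/-!
Split each `M j` into pieces `P j i` with `|P j i| = a (j - i)`; this is possible because
`i ↦ j - i` is a bijection, so the sizes add up to `k`. The edge `C i` is the union of the `i`-th
pieces, so it meets `M (j + i)` in exactly `a j` elements.
-/

open Finset Function

theorem Finset.exists_partition_card_eq {α ι : Type*} [DecidableEq α] [Fintype ι]
    (S : Finset α) (b : ι → ℕ) (h : S.card = ∑ i, b i) :
    ∃ P : ι → Finset α, (∀ i, (P i).card = b i) ∧ Pairwise (Disjoint on P) ∧
      univ.biUnion P = S := by
  let e : (Σ i, Fin (b i)) ≃ S := Fintype.equivOfCardEq (by simp [h])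
  have he : ∀ i, Injective fun t : Fin (b i) => (e ⟨i, t⟩ : α) := fun i t t' htt' => by
    simpa using e.injective (Subtype.ext htt')
  refine ⟨fun i => univ.map ⟨_, he i⟩, fun i => by simp, fun i j hij => ?_, ?_⟩
  · simp only [onFun, disjoint_left, mem_map, mem_univ, true_and, Embedding.coeFn_mk]
    rintro _ ⟨t, rfl⟩ ⟨t', htt'⟩
    exact hij (congrArg Sigma.fst (e.injective (Subtype.ext htt'))).symm
  · ext x
    simp only [mem_biUnion, mem_univ, true_and, mem_map, Embedding.coeFn_mk]
    refine ⟨fun ⟨i, t, hx⟩ => hx ▸ (e ⟨i, t⟩).2, fun hx => ?_⟩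
    exact ⟨(e.symm ⟨x, hx⟩).1, (e.symm ⟨x, hx⟩).2, by simp⟩

theorem Finset.biUnion_inter_eq_of_subset {α ι : Type*} [DecidableEq α] [Fintype ι]
    {M Q : ι → Finset α} (hM : Pairwise (Disjoint on M)) (hQ : ∀ j, Q j ⊆ M j) (m : ι) :
    univ.biUnion Q ∩ M m = Q m := by
  refine Subset.antisymm (fun x hx => ?_)
    (subset_inter (subset_biUnion_of_mem Q (mem_univ m)) (hQ m))
  obtain ⟨hxQ, hxM⟩ := mem_inter.mp hx
  obtain ⟨j, -, hxj⟩ := mem_biUnion.mp hxQ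
  obtain rfl : j = m := by_contra fun hjm => disjoint_left.mp (hM hjm) (hQ j hxj) hxM
  exact hxj

theorem exists_shifted_covering {α ι : Type*} [DecidableEq α] [Fintype ι] [AddGroup ι]
    (M : ι → Finset α) (hM : Pairwise (Disjoint on M)) (a : ι → ℕ)
    (hcard : ∀ j, (M j).card = ∑ i, a i) :
    ∃ C : ι → Finset α, Pairwise (Disjoint on C) ∧ (∀ i, (C i).card = ∑ j, a j) ∧
      univ.biUnion C = univ.biUnion M ∧
      ∀ i, ∃ σ : Equiv.Perm ι, ∀ j, (C i ∩ M (σ j)).card = a j := by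
  have hcard' (j : ι) : (M j).card = ∑ i, a (j - i) := by
    rw [hcard, ← Equiv.sum_comp (Equiv.subLeft j) a]
    rfl
  choose P hPcard hPdisj hPunion using fun j => (M j).exists_partition_card_eq _ (hcard' j)
  have hPM (j i : ι) : P j i ⊆ M j := hPunion j ▸ subset_biUnion_of_mem (P j) (mem_univ i)
  have hPM_disj (i : ι) : Pairwise (Disjoint on fun j => P j i) := fun j j' hjj' =>
    (hM hjj').mono (hPM j i) (hPM j' i)
  refine ⟨fun i => univ.biUnion fun j => P j i, fun i i' hii' => ?_, fun i => ?_, ?_,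
    fun i => ?_⟩
  · simp only [onFun, disjoint_biUnion_left, disjoint_biUnion_right, mem_univ, forall_const]
    intro j' j
    obtain rfl | hjj' := eq_or_ne j j'
    · exact hPdisj j hii'
    · exact (hM hjj').mono (hPM j i) (hPM j' i')
  · rw [card_biUnion ((hPM_disj i).set_pairwise _), ← Equiv.sum_comp (Equiv.subRight i) a]
    exact sum_congr rfl fun j _ => hPcard j i
  · calc univ.biUnion (fun i => univ.biUnion fun j => P j i)
          = univ.biUnion fun j => univ.biUnion (P j) := by
            ext x
            simp only [mem_biUnion, mem_univ, true_and]
            exact exists_comm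
      _ = univ.biUnion M := by simp only [hPunion]
  · refine ⟨Equiv.addRight i, fun j => ?_⟩
    rw [Equiv.coe_addRight, biUnion_inter_eq_of_subset hM (fun j => hPM j i), hPcard,
      add_sub_cancel_right]

theorem stmt_6_general {α : Type*} [DecidableEq α] (k l : ℕ)
    (M : Fin l → Finset α)
    (hdisj : ∀ i j, i ≠ j → Disjoint (M i) (M j))
    (hcard : ∀ i, (M i).card = k)
    (a : Fin l → ℕ)
    (hsum : ∑ i, a i = k) :
    ∃ C : Fin l → Finset α,
      (∀ i j, i ≠ j → Disjoint (C i) (C j)) ∧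
      (∀ i, (C i).card = k) ∧
      (Finset.univ.biUnion C = Finset.univ.biUnion M) ∧
      (∀ i, ∃ σ : Equiv.Perm (Fin l), ∀ j, (C i ∩ M (σ j)).card = a j) := by
  cases l with
  | zero => exact ⟨M, hdisj, finZeroElim, rfl, finZeroElim⟩
  | succ l =>
    obtain ⟨C, hCdisj, hCcard, hCunion, hCtype⟩ :=
      exists_shifted_covering M hdisj a fun j => (hcard j).trans hsum.symm
    exact ⟨C, hCdisj, fun i => (hCcard i).trans hsum, hCunion, hCtype⟩

theorem stmt_6 {α : Type*} [DecidableEq α] (k l : ℕ) (hk : 2 ≤ k) (hl : 2 ≤ l) (hlk : l ≤ k)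
    (M : Fin l → Finset α)
    (hdisj : ∀ i j, i ≠ j → Disjoint (M i) (M j))
    (hcard : ∀ i, (M i).card = k)
    (a : Fin l → ℕ)
    (hmono : ∀ i j : Fin l, i ≤ j → a j ≤ a i)
    (hpos : ∀ i, 1 ≤ a i)
    (hsum : ∑ i, a i = k) :
    ∃ C : Fin l → Finset α,
      (∀ i j, i ≠ j → Disjoint (C i) (C j)) ∧
      (∀ i, (C i).card = k) ∧
      (Finset.univ.biUnion C = Finset.univ.biUnion M) ∧
      (∀ i, ∃ σ : Equiv.Perm (Fin l), ∀ j, (C i ∩ M (σ j)).card = a j) :=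
  stmt_6_general k l M hdisj hcard a hsum
end

section
/- Let k ≥ 2 and m ≥ 1, and let H*_m be the k-graph on vertex set {1,…,km} defined recursively by E_0 = ∅ and E_m = E_{m-1} ∪ { E ⊆ {1,…,km} : |E| = k, E ∩ M_m ≠ ∅, km ∉ E } ∪ {M_m}, where M_i = {k(i-1)+1, …, ki}. Then {M_1,…,M_m} is the unique perfect matching of H*_m. -/
open Finset

/-- The `i`-th matching edge `M_i = {k(i-1)+1, …, ki}`. -/
def Mset (k i : ℕ) : Finset ℕ := Finset.Icc (k * (i - 1) + 1) (k * i)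

/-- The edge set of the extremal hypergraph `H*_m`. -/
def Edges (k : ℕ) : ℕ → Finset (Finset ℕ)
  | 0 => ∅
  | m + 1 =>
      Edges k m ∪
        ((Finset.Icc 1 (k * (m + 1))).powersetCard k).filter
          (fun E => (E ∩ Mset k (m + 1)).Nonempty ∧ k * (m + 1) ∉ E) ∪
        {Mset k (m + 1)}

/-- `P` is a perfect matching of the hypergraph with vertex set `V` and edge set `E`. -/
def IsPM (V : Finset ℕ) (E P : Finset (Finset ℕ)) : Prop :=
  P ⊆ E ∧ (∀ e ∈ P, ∀ e' ∈ P, e ≠ e' → Disjoint e e') ∧ P.biUnion id = V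

lemma Mset_disjoint {k i j : ℕ} (h : i ≠ j) : Disjoint (Mset k i) (Mset k j) := by
  wlog hij : i < j with H
  · exact (H h.symm (by omega)).symm
  rw [Finset.disjoint_left]
  intro x hx hx'
  simp only [Mset, Finset.mem_Icc] at hx hx'
  have : k * i ≤ k * (j - 1) := Nat.mul_le_mul_left _ (by omega)
  omega

lemma biUnion_Mset (k : ℕ) : ∀ m, (Finset.Icc 1 m).biUnion (Mset k) = Finset.Icc 1 (k * m)
  | 0 => by simp
  | m + 1 => by
      have h : Finset.Icc 1 (m + 1) = insert (m + 1) (Finset.Icc 1 m) := by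
        ext x; simp [Finset.mem_Icc]; omega
      rw [h, Finset.biUnion_insert, biUnion_Mset k m]
      ext x
      simp only [Mset, Finset.mem_union, Finset.mem_Icc, Nat.mul_succ, Nat.add_sub_cancel]
      omega

lemma Mset_mem_Edges (k : ℕ) : ∀ m i, 1 ≤ i → i ≤ m → Mset k i ∈ Edges k m
  | 0, i, h1, h2 => by omega
  | m + 1, i, h1, h2 => by
      rcases Nat.lt_or_ge i (m + 1) with h | h
      · exact Finset.mem_union_left _ (Finset.mem_union_left _
          (Mset_mem_Edges k m i h1 (by omega)))
      · have : i = m + 1 := by omega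
        subst this
        exact Finset.mem_union_right _ (Finset.mem_singleton_self _)

lemma Edges_subset (k : ℕ) : ∀ m, ∀ e ∈ Edges k m, e ⊆ Finset.Icc 1 (k * m)
  | 0, e, he => by simp [Edges] at he
  | m + 1, e, he => by
      simp only [Edges, Finset.mem_union, Finset.mem_filter, Finset.mem_powersetCard,
        Finset.mem_singleton] at he
      rcases he with (he | ⟨⟨he, _⟩, _⟩) | he
      · refine (Edges_subset k m e he).trans ?_
        apply Finset.Icc_subset_Icc le_rfl
        exact Nat.mul_le_mul_left _ (by omega)
      · exact he
      · subst he
        apply Finset.Icc_subset_Icc (by omega) le_rfl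

lemma edge_eq_of_mem_top {k m : ℕ} (hk : 1 ≤ k) {e : Finset ℕ}
    (he : e ∈ Edges k (m + 1)) (hmem : k * (m + 1) ∈ e) : e = Mset k (m + 1) := by
  simp only [Edges, Finset.mem_union, Finset.mem_filter, Finset.mem_powersetCard,
    Finset.mem_singleton] at he
  rcases he with (he | ⟨_, _, hne⟩) | he
  · have := Edges_subset k m e he hmem
    simp only [Finset.mem_Icc] at this
    have : k * m < k * (m + 1) := by
      have := Nat.mul_le_mul_left k (Nat.le_refl m)
      nlinarith
    omega
  · exact absurd hmem hne
  · exact he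

lemma edge_mem_of_disjoint {k m : ℕ} (hk : 1 ≤ k) {e : Finset ℕ}
    (he : e ∈ Edges k (m + 1)) (hd : Disjoint e (Mset k (m + 1))) : e ∈ Edges k m := by
  have hne : (Mset k (m + 1)).Nonempty := by
    simp only [Mset, Nat.add_sub_cancel, Finset.nonempty_Icc, Nat.mul_succ]
    omega
  simp only [Edges, Finset.mem_union, Finset.mem_filter, Finset.mem_powersetCard,
    Finset.mem_singleton] at he
  rcases he with (he | ⟨_, hint, _⟩) | he
  · exact he
  · rw [Finset.disjoint_left] at hd
    obtain ⟨x, hx⟩ := hint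
    rw [Finset.mem_inter] at hx
    exact absurd hx.2 (hd hx.1)
  · subst he
    rw [(Finset.disjoint_self_iff_empty _).mp hd] at hne
    exact absurd hne (by simp)

lemma main_lemma (k : ℕ) (hk : 1 ≤ k) : ∀ m,
    IsPM (Finset.Icc 1 (k * m)) (Edges k m) ((Finset.Icc 1 m).image (Mset k)) ∧
      ∀ P, IsPM (Finset.Icc 1 (k * m)) (Edges k m) P →
        P = (Finset.Icc 1 m).image (Mset k)
  | 0 => by
      constructor
      · refine ⟨?_, ?_, ?_⟩ <;> simp [Edges, IsPM]
      · intro P hP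
        have := hP.1
        simp [Edges, Finset.subset_empty] at this
        simp [this]
  | m + 1 => by
      obtain ⟨⟨ihSub, ihDisj, ihUnion⟩, ihUniq⟩ := main_lemma k hk m
      constructor
      · refine ⟨?_, ?_, ?_⟩
        · intro e he
          simp only [Finset.mem_image, Finset.mem_Icc] at he
          obtain ⟨i, ⟨h1, h2⟩, rfl⟩ := he
          exact Mset_mem_Edges k (m + 1) i h1 h2
        · intro e he e' he' hne
          simp only [Finset.mem_image, Finset.mem_Icc] at he he'
          obtain ⟨i, _, rfl⟩ := he
          obtain ⟨j, _, rfl⟩ := he'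
          exact Mset_disjoint (fun h => hne (by rw [h]))
        · rw [Finset.image_biUnion]
          simpa using biUnion_Mset k (m + 1)
      · intro P ⟨hSub, hDisj, hUnion⟩
        have hVmem : k * (m + 1) ∈ Finset.Icc 1 (k * (m + 1)) := by
          simp only [Finset.mem_Icc, Nat.mul_succ]; omega
        rw [← hUnion] at hVmem
        obtain ⟨e, heP, hemem⟩ := Finset.mem_biUnion.mp hVmem
        simp only [id] at hemem
        have heq : e = Mset k (m + 1) := edge_eq_of_mem_top hk (hSub heP) hemem
        subst heq
        set P' := P.erase (Mset k (m + 1)) with hP'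
        have hP'sub : P' ⊆ Edges k m := by
          intro e' he'
          have hne := Finset.ne_of_mem_erase he'
          have he'P := Finset.mem_of_mem_erase he'
          exact edge_mem_of_disjoint hk (hSub he'P) (hDisj e' he'P _ heP hne)
        have hP'disj : ∀ e ∈ P', ∀ e' ∈ P', e ≠ e' → Disjoint e e' := fun e he e' he' h =>
          hDisj e (Finset.mem_of_mem_erase he) e' (Finset.mem_of_mem_erase he') h
        have hPinsert : P = insert (Mset k (m + 1)) P' := (Finset.insert_erase heP).symm
        have hP'union : P'.biUnion id = Finset.Icc 1 (k * m) := by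
          ext x
          constructor
          · intro hx
            obtain ⟨e', he'P, hxe⟩ := Finset.mem_biUnion.mp hx
            simp only [id] at hxe
            have hxV : x ∈ Finset.Icc 1 (k * (m + 1)) := by
              rw [← hUnion]
              exact Finset.mem_biUnion.mpr ⟨e', Finset.mem_of_mem_erase he'P, hxe⟩
            have hnd : x ∉ Mset k (m + 1) := by
              have hne := Finset.ne_of_mem_erase he'P
              have := hDisj e' (Finset.mem_of_mem_erase he'P) _ heP hne
              exact fun hxm => (Finset.disjoint_left.mp this hxe) hxm
            simp only [Finset.mem_Icc, Nat.mul_succ] at hxV ⊢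
            simp only [Mset, Finset.mem_Icc, Nat.mul_succ, Nat.add_sub_cancel] at hnd
            omega
          · intro hx
            have hxV : x ∈ P.biUnion id := by
              rw [hUnion]
              simp only [Finset.mem_Icc, Nat.mul_succ] at hx ⊢
              omega
            obtain ⟨e', he'P, hxe⟩ := Finset.mem_biUnion.mp hxV
            have hne' : e' ≠ Mset k (m + 1) := by
              intro h
              subst h
              simp only [id, Mset, Finset.mem_Icc, Nat.add_sub_cancel] at hxe
              simp only [Finset.mem_Icc] at hx
              omega
            exact Finset.mem_biUnion.mpr ⟨e', Finset.mem_erase.mpr ⟨hne', he'P⟩, hxe⟩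
        have hP'eq : P' = (Finset.Icc 1 m).image (Mset k) :=
          ihUniq P' ⟨hP'sub, hP'disj, hP'union⟩
        rw [hPinsert, hP'eq]
        have h : Finset.Icc 1 (m + 1) = insert (m + 1) (Finset.Icc 1 m) := by
          ext x; simp [Finset.mem_Icc]; omega
        rw [h, Finset.image_insert]

theorem stmt_7 (k m : ℕ) (hk : 2 ≤ k) (hm : 1 ≤ m) :
    IsPM (Finset.Icc 1 (k * m)) (Edges k m) ((Finset.Icc 1 m).image (Mset k)) ∧
      ∀ P, IsPM (Finset.Icc 1 (k * m)) (Edges k m) P →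
        P = (Finset.Icc 1 m).image (Mset k) := by
  exact main_lemma k (by omega) m
end

section
/- Let k ≥ 2 and m ≥ 1, and let H*_m be the k-graph on {1,…,km} with edge set E_m defined by E_0 = ∅ and E_m = E_{m-1} ∪ { E : |E| = k, E ∩ M_m ≠ ∅, km ∉ E } ∪ {M_m}, where M_i = {k(i-1)+1,…,ki}. Then |E_m| = f(k,m) = m + Σ_{ℓ=2}^{k} b_{k,ℓ} C(m,ℓ), where b_{k,ℓ} = ((ℓ-1)/ℓ) Σ_{i=0}^{ℓ-1} (-1)^i C(ℓ,i) C(k(ℓ-i),k). -/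
open Finset

/-!
Stage by stage, `H*_{m+1}` gains the `k`-subsets of `{1, …, km + k - 1}` not contained in
`{1, …, km}`, plus `M_{m+1}`. With `h(y) = C(ky, k)` and `C(ky - 1, k) = h(y) (1 - 1/y)`, this
telescopes to `|E_m| = m + h(m) - ∑_{y=1}^m h(y)/y`. Since `h` is a polynomial of degree `k`
vanishing at `0`, Newton's forward-difference formula gives `h(y) = ∑_{l=1}^k C(y, l) Δ^l h(0)`,
and the hockey-stick identity `∑_{y=1}^m C(y, l)/y = C(m, l)/l` turns the right-hand side into
`m + ∑_{l=1}^k (1 - 1/l) Δ^l h(0) C(m, l)`; the coefficient `(1 - 1/l) Δ^l h(0)` is `b_{k,l}`.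
-/

lemma Mset_succ (k m : ℕ) : Mset k (m + 1) = Icc (k * m + 1) (k * m + k) := by
  rw [Mset, Nat.add_sub_cancel, Nat.mul_succ]

lemma subset_Icc_of_mem_Edges {k : ℕ} :
    ∀ {m : ℕ} {E : Finset ℕ}, E ∈ Edges k m → E ⊆ Icc 1 (k * m)
  | 0, E, hE => by simp [Edges] at hE
  | m + 1, E, hE => by
    simp only [Edges, mem_union, mem_filter, mem_powersetCard, mem_singleton] at hE
    rcases hE with (hE | ⟨⟨hE, -⟩, -⟩) | rfl
    · exact (subset_Icc_of_mem_Edges hE).trans (Icc_subset_Icc_right (Nat.mul_le_mul_left k m.le_succ))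
    · exact hE
    · rw [Mset_succ, Nat.mul_succ]
      exact Icc_subset_Icc_left (by omega)

lemma filter_powersetCard_meets_Mset_eq (k m : ℕ) :
    ((Icc 1 (k * (m + 1))).powersetCard k).filter
        (fun E => (E ∩ Mset k (m + 1)).Nonempty ∧ k * (m + 1) ∉ E)
      = (Icc 1 (k * m + k - 1)).powersetCard k \ (Icc 1 (k * m)).powersetCard k := by
  ext E
  simp only [mem_filter, mem_powersetCard, mem_sdiff, Mset_succ, Nat.mul_succ, not_and,
    Finset.Nonempty, mem_inter, subset_iff, mem_Icc]
  constructor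
  · rintro ⟨⟨hsub, hcard⟩, ⟨x, hxE, hx⟩, htop⟩
    refine ⟨⟨fun y hy => ?_, hcard⟩, fun hle _ => by have := hle hxE; omega⟩
    have := hsub hy
    have : y ≠ k * m + k := fun h => htop (h ▸ hy)
    omega
  · rintro ⟨⟨hsub, hcard⟩, hnot⟩
    obtain ⟨x, hxE, hx⟩ : ∃ x ∈ E, k * m < x := by
      by_contra! hle
      exact hnot (fun y hy => ⟨(hsub hy).1, hle y hy⟩) hcard
    refine ⟨⟨fun y hy => ?_, hcard⟩, ⟨x, hxE, ?_⟩, fun h => ?_⟩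
    · have := hsub hy; omega
    · have := hsub hxE; omega
    · have := hsub h; omega

lemma card_Edges_succ {k : ℕ} (hk : 0 < k) (m : ℕ) :
    #(Edges k (m + 1)) = #(Edges k m) + ((k * m + k - 1).choose k - (k * m).choose k) + 1 := by
  have htop : k * m + k ∈ Mset k (m + 1) := by rw [Mset_succ]; simp; omega
  rw [Edges, card_union_of_disjoint, card_union_of_disjoint, card_singleton,
    filter_powersetCard_meets_Mset_eq, card_sdiff_of_subset, card_powersetCard,
    card_powersetCard, Nat.card_Icc, Nat.card_Icc, Nat.add_sub_cancel, Nat.add_sub_cancel]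
  · exact powersetCard_mono (Icc_subset_Icc_right (by omega))
  · rw [disjoint_left]
    intro E hE hnew
    obtain ⟨x, hx⟩ := (mem_filter.mp hnew).2.1
    have h1 := subset_Icc_of_mem_Edges hE (mem_inter.mp hx).1
    have h2 := (mem_inter.mp hx).2
    rw [Mset_succ, mem_Icc] at h2
    rw [mem_Icc] at h1
    omega
  · rw [disjoint_singleton_right, mem_union, not_or]
    refine ⟨fun hM => ?_, fun hM => (mem_filter.mp hM).2.2 (by rwa [Nat.mul_succ])⟩
    have := mem_Icc.mp (subset_Icc_of_mem_Edges hM htop)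
    omega

lemma choose_mul_add_sub_one {k : ℕ} (hk : 0 < k) (n : ℕ) :
    ((k * n + k - 1).choose k : ℚ)
      = (k * n + k).choose k - (k * n + k).choose k / (n + 1) := by
  have h := Nat.choose_mul_succ_eq (k * n + k - 1) k
  rw [Nat.sub_add_cancel (by omega), Nat.add_sub_cancel] at h
  have h' : (k : ℚ) * ((k * n + k - 1).choose k * (n + 1)) = k * ((k * n + k).choose k * n) := by
    exact_mod_cast (by linear_combination h : k * ((k * n + k - 1).choose k * (n + 1)) = _)
  have := mul_left_cancel₀ (Nat.cast_ne_zero.mpr hk.ne') h'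
  field_simp
  linear_combination this

lemma card_Edges_eq {k : ℕ} (hk : 0 < k) (m : ℕ) :
    (#(Edges k m) : ℚ) = m + (k * m).choose k - ∑ y ∈ Icc 1 m, ((k * y).choose k : ℚ) / y := by
  induction m with
  | zero => simp [Edges, Nat.choose_eq_zero_of_lt hk]
  | succ m ih =>
    have hmono : (k * m).choose k ≤ (k * m + k - 1).choose k := Nat.choose_le_choose k (by omega)
    rw [card_Edges_succ hk, Nat.cast_add, Nat.cast_add, Nat.cast_sub hmono, ih,
      choose_mul_add_sub_one hk, sum_Icc_succ_top (by omega), Nat.mul_succ]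
    push_cast
    ring

lemma sum_Icc_choose_div_self {l : ℕ} (hl : 0 < l) (m : ℕ) :
    ∑ y ∈ Icc 1 m, (y.choose l : ℚ) / y = m.choose l / l := by
  obtain ⟨j, rfl⟩ : ∃ j, l = j + 1 := ⟨l - 1, by omega⟩
  induction m with
  | zero => simp
  | succ m ih =>
    have key : ((m + 1) * m.choose j : ℚ) = (m + 1).choose (j + 1) * (j + 1) := by
      exact_mod_cast Nat.add_one_mul_choose_eq m j
    have pascal : ((m + 1).choose (j + 1) : ℚ) = m.choose j + m.choose (j + 1) := by
      exact_mod_cast Nat.choose_succ_succ' m j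
    rw [sum_Icc_succ_top (by omega), ih]
    push_cast
    field_simp
    linear_combination -key - (m + 1) * pascal

lemma eq_sum_range_choose_mul_fwdDiff_iter {H : ℚ → ℚ} {k : ℕ}
    (hH : ∀ l, k < l → (fwdDiff 1)^[l] H 0 = 0) (m : ℕ) :
    H m = ∑ l ∈ range (k + 1), (m.choose l : ℚ) * (fwdDiff 1)^[l] H 0 := by
  have newton := shift_eq_sum_fwdDiff_iter (1 : ℚ) H m 0
  simp only [zero_add, nsmul_eq_mul, mul_one] at newton
  rw [newton]
  have hsub : ∀ n ≤ max k m, range (n + 1) ⊆ range (max k m + 1) := fun n hn =>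
    range_subset_range.mpr (by omega)
  rw [sum_subset (hsub m (le_max_right k m)), sum_subset (hsub k (le_max_left k m))]
  · intro l _ hl
    rw [hH l (by simpa using hl), mul_zero]
  · intro l _ hl
    rw [Nat.choose_eq_zero_of_lt (by simpa using hl), Nat.cast_zero, zero_mul]

lemma sub_sum_Icc_div_self {H : ℚ → ℚ} {k : ℕ} (h0 : H 0 = 0)
    (hH : ∀ l, k < l → (fwdDiff 1)^[l] H 0 = 0) (m : ℕ) :
    H m - ∑ y ∈ Icc 1 m, H y / y
      = ∑ l ∈ Icc 1 k, ((l - 1 : ℚ) / l) * (fwdDiff 1)^[l] H 0 * m.choose l := by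
  have newton : ∀ n : ℕ, H n = ∑ l ∈ Icc 1 k, (n.choose l : ℚ) * (fwdDiff 1)^[l] H 0 := by
    intro n
    rw [eq_sum_range_choose_mul_fwdDiff_iter hH, range_eq_Ico, sum_eq_sum_Ico_succ_bot (by omega),
      Function.iterate_zero_apply, h0, mul_zero, zero_add, Ico_add_one_right_eq_Icc]
  simp_rw [newton, sum_div, mul_div_right_comm _ ((fwdDiff 1)^[_] H 0)]
  rw [sum_comm, ← sum_sub_distrib]
  refine sum_congr rfl fun l hl => ?_
  rw [← sum_mul, sum_Icc_choose_div_self (by simp at hl; omega)]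
  have : (l : ℚ) ≠ 0 := Nat.cast_ne_zero.mpr (by simp at hl; omega)
  field_simp

section

open Polynomial

noncomputable def chooseMulPoly (k : ℕ) : ℚ[X] :=
  C ((k.factorial : ℚ)⁻¹) * (descPochhammer ℚ k).comp (C (k : ℚ) * X)

lemma chooseMulPoly_eval_natCast (k n : ℕ) :
    (chooseMulPoly k).eval (n : ℚ) = (k * n).choose k := by
  have hfac : (k.factorial : ℚ) ≠ 0 := by positivity
  rw [chooseMulPoly, eval_mul, eval_C, eval_comp, eval_mul, eval_C, eval_X, ← Nat.cast_mul,
    descPochhammer_eval_eq_descFactorial, Nat.descFactorial_eq_factorial_mul_choose]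
  push_cast
  field_simp

lemma chooseMulPoly_natDegree_le (k : ℕ) : (chooseMulPoly k).natDegree ≤ k := by
  refine (natDegree_C_mul_le _ _).trans (natDegree_comp_le.trans ?_)
  rw [descPochhammer_natDegree]
  exact (Nat.mul_le_mul_left k ((natDegree_C_mul_le _ _).trans natDegree_X_le)).trans (mul_one k).le

lemma fwdDiff_iter_eval_chooseMulPoly (k l : ℕ) :
    (fwdDiff 1)^[l] (chooseMulPoly k).eval 0
      = ∑ i ∈ range (l + 1), (-1 : ℚ) ^ i * l.choose i * (k * (l - i)).choose k := by
  rw [fwdDiff_iter_eq_sum_shift, ← sum_range_reflect]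
  refine sum_congr rfl fun i hi => ?_
  have hil : i ≤ l := by simp at hi; omega
  rw [zero_add, nsmul_one, chooseMulPoly_eval_natCast, zsmul_eq_mul,
    show l + 1 - 1 - i = l - i by omega, Nat.sub_sub_self hil, Nat.choose_symm hil]
  push_cast
  ring

lemma b_eq_fwdDiff_iter_eval_chooseMulPoly {k : ℕ} (hk : 0 < k) (l : ℕ) :
    b k l = ((l - 1 : ℚ) / l) * (fwdDiff 1)^[l] (chooseMulPoly k).eval 0 := by
  rw [b, fwdDiff_iter_eval_chooseMulPoly, sum_range_succ, Nat.sub_self, mul_zero,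
    Nat.choose_eq_zero_of_lt hk, Nat.cast_zero, mul_zero, add_zero]

end

theorem stmt_8_general (k m : ℕ) (hk : 2 ≤ k) :
    ((Edges k m).card : ℚ) = f k m := by
  have hk0 : 0 < k := by omega
  have hvanish : ∀ l, k < l → (fwdDiff 1)^[l] (chooseMulPoly k).eval 0 = 0 := fun l hl =>
    congrFun (Polynomial.fwdDiff_iter_eq_zero_of_degree_lt
      ((chooseMulPoly_natDegree_le k).trans_lt hl)) 0
  have hzero : (chooseMulPoly k).eval 0 = 0 := by
    simpa [Nat.choose_eq_zero_of_lt hk0] using chooseMulPoly_eval_natCast k 0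
  have newton := sub_sum_Icc_div_self hzero hvanish m
  simp_rw [chooseMulPoly_eval_natCast, ← b_eq_fwdDiff_iter_eval_chooseMulPoly hk0] at newton
  have hb1 : b k 1 = 0 := by simp [b]
  rw [card_Edges_eq hk0, add_sub_assoc, newton, f, ← add_sum_Ioc_eq_sum_Icc (by omega),
    ← Icc_add_one_left_eq_Ioc, one_add_one_eq_two, hb1, zero_mul, zero_add]

theorem stmt_8 (k m : ℕ) (hk : 2 ≤ k) (hm : 1 ≤ m) :
    ((Edges k m).card : ℚ) = f k m :=
  stmt_8_general k m hk
end

section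
/- Let k ≥ 2, 2 ≤ ℓ ≤ k, and let H be a k-uniform hypergraph whose vertex set is the union of ℓ pairwise disjoint edges M_1, …, M_ℓ (each of size k) forming a perfect matching of H. Suppose this perfect matching is unique. Then for every type vector a = (a_1 ≥ ⋯ ≥ a_ℓ ≥ 1) with Σa_i = k, the number of edges of H of type a is at most ((ℓ-1)/ℓ)·|G_a|, where G_a is the set of all k-subsets of the vertex set having type a. -/
/-!
Call a partition of `V` into sets of type `a` a covering. A block `M j` is not of type `a`, since
it misses the other blocks while every `a i ≥ 1`; so the unique perfect matching is no covering,
and every covering has a member that is not an edge. Permutations of `V` that permute the blocks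
act transitively on the sets of type `a` and map coverings to coverings, so every set of type `a`
lies in the same number `n > 0` of coverings. Double counting incidences between coverings (each of
size `ℓ`) and sets of type `a` then gives `n · |G_a| = ℓ · #coverings` and
`n · #(edges of type a) ≤ (ℓ - 1) · #coverings`.
-/

open Finset Function Pointwise

theorem card_mul_le_of_card_filter_mem_eq {β : Type*} [DecidableEq β] {G T : Finset β}
    {𝒜 : Finset (Finset β)} {l n : ℕ} (hTG : T ⊆ G) (h𝒜G : ∀ P ∈ 𝒜, P ⊆ G)
    (h𝒜card : ∀ P ∈ 𝒜, #P = l) (h𝒜T : ∀ P ∈ 𝒜, ¬P ⊆ T)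
    (hreg : ∀ C ∈ G, #{P ∈ 𝒜 | C ∈ P} = n) (hn : 0 < n) : l * #T ≤ (l - 1) * #G := by
  have hG : #G * n = #𝒜 * l := by
    refine card_mul_eq_card_mul (· ∈ ·) hreg fun P hP => ?_
    rw [bipartiteBelow, filter_mem_eq_inter, inter_eq_right.2 (h𝒜G P hP), h𝒜card P hP]
  have hT : #T * n ≤ #𝒜 * (l - 1) := by
    refine card_mul_le_card_mul (· ∈ ·) (fun C hC => (hreg C (hTG hC)).ge) fun P hP => ?_
    have hTP : T ∩ P ⊂ P := inter_subset_right.ssubset_of_not_subset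
      fun h => h𝒜T P hP (h.trans inter_subset_left)
    rw [bipartiteBelow, filter_mem_eq_inter, ← h𝒜card P hP]
    exact Nat.le_sub_one_of_lt (card_lt_card hTP)
  refine Nat.le_of_mul_le_mul_right ?_ hn
  calc l * #T * n ≤ l * (#𝒜 * (l - 1)) := by rw [mul_assoc]; exact Nat.mul_le_mul_left l hT
    _ = (l - 1) * #G * n := by rw [mul_assoc, hG]; ring

section

variable {α : Type*} [DecidableEq α]

namespace Finset

theorem card_subtype_mem (s A : Finset α) :
    Fintype.card {x : s // (x : α) ∈ A} = #(s ∩ A) := by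
  rw [Fintype.card_subtype, univ_eq_attach, filter_attach (· ∈ A)]
  simp [filter_mem_eq_inter]

theorem card_subtype_notMem (s A : Finset α) :
    Fintype.card {x : s // (x : α) ∉ A} = #(s \ A) := by
  rw [Fintype.card_subtype, univ_eq_attach, filter_attach (· ∉ A)]
  simp [sdiff_eq_filter]

theorem exists_equiv_mem_iff_mem {s t A B : Finset α} (hs : #s = #t)
    (hA : #(s ∩ A) = #(t ∩ B)) : ∃ e : s ≃ t, ∀ x, (e x : α) ∈ B ↔ (x : α) ∈ A := by
  have hAc : #(s \ A) = #(t \ B) := by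
    have := card_sdiff_add_card_inter s A
    have := card_sdiff_add_card_inter t B
    omega
  have hfiber (b : Bool) : Fintype.card {x : s // decide ((x : α) ∈ A) = b} =
      Fintype.card {y : t // decide ((y : α) ∈ B) = b} := by
    cases b
    · simp only [decide_eq_false_iff_not, card_subtype_notMem, hAc]
    · simp only [decide_eq_true_eq, card_subtype_mem, hA]
  refine ⟨Equiv.ofFiberEquiv fun b => Fintype.equivOfCardEq (hfiber b), fun x => ?_⟩
  simpa using Equiv.ofFiberEquiv_map (fun b => Fintype.equivOfCardEq (hfiber b)) x

theorem exists_pairwise_disjoint_card_eq {ι : Type*} [Fintype ι] [DecidableEq ι]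
    (s : Finset α) (f : ι → ℕ) (h : #s = ∑ i, f i) :
    ∃ B : ι → Finset α,
      (∀ i, #(B i) = f i) ∧ Pairwise (Disjoint on B) ∧ univ.biUnion B = s := by
  let e : s ≃ Σ i, Fin (f i) := Fintype.equivOfCardEq (by simp [h])
  refine ⟨fun i => ({x : s | (e x).1 = i} : Finset s).map (Embedding.subtype _),
    fun i => ?_, fun i j hij => ?_, ?_⟩
  · rw [card_map, ← Fintype.card_subtype, ← Fintype.card_fin (f i)]
    exact Fintype.card_congr ((e.subtypeEquiv fun _ => Iff.rfl).trans (Equiv.sigmaSubtype i))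
  · simp only [onFun, disjoint_left, mem_map, mem_filter, mem_univ, true_and,
      Embedding.coe_subtype]
    rintro _ ⟨x, rfl, rfl⟩ ⟨y, rfl, hyx⟩
    exact hij (by rw [Subtype.ext hyx])
  · ext x
    simp only [mem_biUnion, mem_univ, true_and, mem_map, mem_filter, Embedding.coe_subtype]
    exact ⟨fun ⟨_, y, _, hy⟩ => hy ▸ y.2, fun hx => ⟨_, ⟨x, hx⟩, rfl, rfl⟩⟩

end Finset

section Coverings

def coverings (G : Finset (Finset α)) (V : Finset α) : Finset (Finset (Finset α)) :=
  {P ∈ G.powerset | (∀ A ∈ P, ∀ B ∈ P, A ≠ B → Disjoint A B) ∧ P.biUnion id = V}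

variable {G : Finset (Finset α)} {V : Finset α} {P : Finset (Finset α)}

theorem mem_coverings : P ∈ coverings G V ↔
    P ⊆ G ∧ (∀ A ∈ P, ∀ B ∈ P, A ≠ B → Disjoint A B) ∧ P.biUnion id = V := by
  rw [coverings, mem_filter, mem_powerset]

theorem card_eq_of_mem_coverings {k l : ℕ} (hk : 0 < k) (hG : ∀ A ∈ G, #A = k)
    (hV : #V = l * k) (hP : P ∈ coverings G V) : #P = l := by
  obtain ⟨hPG, hPdisj, hPV⟩ := mem_coverings.1 hP
  refine Nat.eq_of_mul_eq_mul_right hk ?_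
  rw [← hV, ← hPV, card_biUnion (t := id) fun A hA B hB h => hPdisj A hA B hB h]
  exact (sum_const_nat fun A hA => hG A (hPG hA)).symm

variable {Γ : Type*} [Group Γ] [MulAction Γ α] {g : Γ}

theorem smul_mem_coverings (hG : ∀ A ∈ G, g • A ∈ G) (hV : g • V = V)
    (hP : P ∈ coverings G V) : g • P ∈ coverings G V := by
  obtain ⟨hPG, hPdisj, hPV⟩ := mem_coverings.1 hP
  refine mem_coverings.2 ⟨fun B hB => ?_, fun B hB B' hB' hne => ?_, ?_⟩
  · obtain ⟨A, hA, rfl⟩ := mem_smul_finset.1 hB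
    exact hG A (hPG hA)
  · obtain ⟨A, hA, rfl⟩ := mem_smul_finset.1 hB
    obtain ⟨A', hA', rfl⟩ := mem_smul_finset.1 hB'
    rw [smul_finset_def, smul_finset_def, disjoint_image (MulAction.injective g)]
    exact hPdisj A hA A' hA' (by rintro rfl; exact hne rfl)
  · rw [← hV, ← hPV, smul_finset_def, image_biUnion, smul_finset_def, biUnion_image]
    rfl

theorem card_filter_mem_coverings_le_smul (hG : ∀ A ∈ G, g • A ∈ G) (hV : g • V = V)
    (C : Finset α) : #{P ∈ coverings G V | C ∈ P} ≤ #{P ∈ coverings G V | g • C ∈ P} := by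
  rw [← card_smul_finset g]
  refine card_le_card fun Q hQ => ?_
  obtain ⟨P, hP, rfl⟩ := mem_smul_finset.1 hQ
  rw [mem_filter] at hP ⊢
  exact ⟨smul_mem_coverings hG hV hP.1, smul_mem_smul_finset hP.2⟩

end Coverings

section Blocks

variable {l : ℕ} (M : Fin l → Finset α) (a : Fin l → ℕ) (k : ℕ)

def HasType (A : Finset α) : Prop :=
  ∃ σ : Equiv.Perm (Fin l), ∀ i, #(A ∩ M (σ i)) = a i

instance : DecidablePred (HasType M a) := fun _ => by unfold HasType; infer_instance

/-- The family `G_a` of the paper (there `k = ∑ i, a i`). -/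
def typeSets : Finset (Finset α) :=
  {A ∈ (univ.biUnion M).powersetCard k | HasType M a A}

variable {M a k}

theorem mem_typeSets {A : Finset α} :
    A ∈ typeSets M a k ↔ A ⊆ univ.biUnion M ∧ #A = k ∧ HasType M a A := by
  rw [typeSets, mem_filter, mem_powersetCard, and_assoc]

theorem HasType.card_eq_sum (hM : Pairwise (Disjoint on M)) {A : Finset α}
    (hA : A ⊆ univ.biUnion M) (h : HasType M a A) : #A = ∑ i, a i := by
  obtain ⟨σ, hσ⟩ := h
  have hA' : A = univ.biUnion fun j => A ∩ M j := by
    rw [← inter_biUnion, inter_eq_left.2 hA]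
  rw [hA', card_biUnion fun i _ j _ hij => (hM hij).mono inter_subset_right inter_subset_right,
    ← Equiv.sum_comp σ]
  exact sum_congr rfl fun i _ => hσ i

theorem not_hasType_block (hM : Pairwise (Disjoint on M)) (hl : 2 ≤ l) (ha : ∀ i, 1 ≤ a i)
    (j : Fin l) : ¬HasType M a (M j) := by
  rintro ⟨σ, hσ⟩
  have : Nontrivial (Fin l) := Fin.nontrivial_iff_two_le.2 hl
  obtain ⟨j', hj'⟩ := exists_ne j
  have := hσ (σ.symm j')
  rw [σ.apply_symm_apply, disjoint_iff_inter_eq_empty.1 (hM hj'.symm), card_empty] at this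
  exact (ha _).not_gt (this ▸ zero_lt_one)

section PermutingBlocks

variable {π : Equiv.Perm α} {τ : Equiv.Perm (Fin l)}

theorem HasType.smul {A : Finset α} (h : HasType M a A) (hπ : ∀ j, π • M j = M (τ j)) :
    HasType M a (π • A) := by
  obtain ⟨σ, hσ⟩ := h
  refine ⟨σ.trans τ, fun i => ?_⟩
  rw [Equiv.trans_apply, ← hπ, ← smul_finset_inter, card_smul_finset, hσ]

theorem smul_biUnion_eq (hπ : ∀ j, π • M j = M (τ j)) :
    π • univ.biUnion M = univ.biUnion M := by
  ext y
  simp only [smul_finset_def, biUnion_image] at hπ ⊢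
  simp only [hπ, mem_biUnion, mem_univ, true_and]
  exact ⟨fun ⟨j, h⟩ => ⟨_, h⟩, fun ⟨j, h⟩ => ⟨τ.symm j, by rwa [τ.apply_symm_apply]⟩⟩

theorem smul_mem_typeSets (hπ : ∀ j, π • M j = M (τ j)) {A : Finset α}
    (hA : A ∈ typeSets M a k) : π • A ∈ typeSets M a k := by
  obtain ⟨hAV, hAk, hAa⟩ := mem_typeSets.1 hA
  refine mem_typeSets.2 ⟨?_, by rw [card_smul_finset, hAk], hAa.smul hπ⟩
  rw [← smul_biUnion_eq hπ]
  exact smul_finset_subset_smul_finset hAV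

end PermutingBlocks

theorem exists_perm_smul_eq_of_hasType (hM : Pairwise (Disjoint on M))
    (hcard : ∀ j, #(M j) = k) {C C' : Finset α} (hC : C ⊆ univ.biUnion M)
    (hC' : C' ⊆ univ.biUnion M) (hCa : HasType M a C) (hC'a : HasType M a C') :
    ∃ π : Equiv.Perm α, ∃ τ : Equiv.Perm (Fin l), (∀ j, π • M j = M (τ j)) ∧ π • C = C' := by
  classical
  have hCC' : #C = #C' := by rw [hCa.card_eq_sum hM hC, hC'a.card_eq_sum hM hC']
  obtain ⟨σ, hσ⟩ := hCa
  obtain ⟨σ', hσ'⟩ := hC'a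
  set τ := σ.symm.trans σ'
  have hinter (j : Fin l) : #(M j ∩ C) = #(M (τ j) ∩ C') := by
    rw [inter_comm, inter_comm _ C', ← σ.apply_symm_apply j, hσ, Equiv.trans_apply,
      Equiv.symm_apply_apply, hσ']
  choose e he using fun j =>
    exists_equiv_mem_iff_mem ((hcard j).trans (hcard (τ j)).symm) (hinter j)
  -- glue the bijections `e j : M j ≃ M (τ j)` into a permutation of `V`, the identity elsewhere
  have hM' : Pairwise (Disjoint on fun j => (M j : Set α)) := fun i j h => disjoint_coe.2 (hM h)
  let ρ : Equiv.Perm (⋃ j, (M j : Set α)) := (Set.unionEqSigmaOfDisjoint hM').trans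
    ((Equiv.sigmaCongr τ e).trans (Set.unionEqSigmaOfDisjoint hM').symm)
  have hρ (j : Fin l) (x : α) (hx : x ∈ M j) : Equiv.Perm.ofSubtype ρ x = e j ⟨x, hx⟩ := by
    have hU : x ∈ ⋃ j, (M j : Set α) := Set.mem_iUnion.2 ⟨j, hx⟩
    have : Set.unionEqSigmaOfDisjoint hM' ⟨x, hU⟩ = ⟨j, ⟨x, hx⟩⟩ := by
      rw [← Equiv.eq_symm_apply]
      rfl
    rw [Equiv.Perm.ofSubtype_apply_of_mem ρ hU]
    simp only [ρ, Equiv.trans_apply, this]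
    rfl
  refine ⟨Equiv.Perm.ofSubtype ρ, τ, fun j => ?_, ?_⟩
  · refine eq_of_subset_of_card_le (fun y hy => ?_) (by rw [card_smul_finset, hcard, hcard])
    obtain ⟨x, hx, rfl⟩ := mem_smul_finset.1 hy
    rw [Equiv.Perm.smul_def, hρ j x hx]
    exact (e j _).2
  · refine eq_of_subset_of_card_le (fun y hy => ?_) (by rw [card_smul_finset, hCC'])
    obtain ⟨x, hxC, rfl⟩ := mem_smul_finset.1 hy
    obtain ⟨j, -, hx⟩ := mem_biUnion.1 (hC hxC)
    rw [Equiv.Perm.smul_def, hρ j x hx, he]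
    exact hxC

theorem card_filter_mem_coverings_eq (hM : Pairwise (Disjoint on M))
    (hcard : ∀ j, #(M j) = k) {C C' : Finset α} (hC : C ∈ typeSets M a k)
    (hC' : C' ∈ typeSets M a k) :
    #{P ∈ coverings (typeSets M a k) (univ.biUnion M) | C ∈ P} =
      #{P ∈ coverings (typeSets M a k) (univ.biUnion M) | C' ∈ P} := by
  have key {C C'} (hC : C ∈ typeSets M a k) (hC' : C' ∈ typeSets M a k) :
      #{P ∈ coverings (typeSets M a k) (univ.biUnion M) | C ∈ P} ≤
        #{P ∈ coverings (typeSets M a k) (univ.biUnion M) | C' ∈ P} := by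
    obtain ⟨hCV, -, hCa⟩ := mem_typeSets.1 hC
    obtain ⟨hC'V, -, hC'a⟩ := mem_typeSets.1 hC'
    obtain ⟨π, τ, hπ, rfl⟩ := exists_perm_smul_eq_of_hasType hM hcard hCV hC'V hCa hC'a
    exact card_filter_mem_coverings_le_smul (fun A => smul_mem_typeSets hπ)
      (smul_biUnion_eq hπ) C
  exact (key hC hC').antisymm (key hC' hC)

theorem coverings_typeSets_nonempty [NeZero l] (hM : Pairwise (Disjoint on M))
    (hcard : ∀ j, #(M j) = k) (hsum : ∑ i, a i = k) :
    (coverings (typeSets M a k) (univ.biUnion M)).Nonempty := by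
  -- Cut each block `M j` into pieces `B j p` of size `a (j + p)`; the union `C p` of the
  -- `p`-th pieces meets `M (i - p)` in `a i` points.
  have hsplit (j : Fin l) : #(M j) = ∑ p, a (j + p) := by
    rw [hcard, ← hsum]
    exact (Equiv.sum_comp (Equiv.addLeft j) a).symm
  choose B hBcard hBdisj hBM using fun j => exists_pairwise_disjoint_card_eq (M j) _ (hsplit j)
  have hBsub (j p : Fin l) : B j p ⊆ M j := hBM j ▸ subset_biUnion_of_mem (B j) (mem_univ p)
  set C : Fin l → Finset α := fun p => univ.biUnion fun j => B j p
  have hCM (p j : Fin l) : C p ∩ M j = B j p := by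
    ext x
    simp only [C, mem_inter, mem_biUnion, mem_univ, true_and]
    refine ⟨fun ⟨⟨j', hx⟩, hxj⟩ => ?_, fun hx => ⟨⟨j, hx⟩, hBsub j p hx⟩⟩
    obtain rfl : j' = j := hM.eq (not_disjoint_iff.2 ⟨x, hBsub j' p hx, hxj⟩)
    exact hx
  have hCV (p : Fin l) : C p ⊆ univ.biUnion M := biUnion_mono fun j _ => hBsub j p
  have hCa (p : Fin l) : HasType M a (C p) :=
    ⟨Equiv.subRight p, fun i => by simp [hCM, hBcard]⟩
  have hCdisj : Pairwise (Disjoint on C) := fun p q hpq =>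
    disjoint_biUnion_left _ _ _ |>.2 fun j _ => disjoint_left.2 fun x hxp hxq =>
      disjoint_left.1 (hBdisj j hpq) hxp (hCM q j ▸ mem_inter.2 ⟨hxq, hBsub j p hxp⟩)
  refine ⟨univ.image C, mem_coverings.2 ⟨fun A hA => ?_, fun A hA A' hA' hne => ?_, ?_⟩⟩
  · obtain ⟨p, -, rfl⟩ := mem_image.1 hA
    exact mem_typeSets.2 ⟨hCV p, ((hCa p).card_eq_sum hM (hCV p)).trans hsum, hCa p⟩
  · obtain ⟨p, -, rfl⟩ := mem_image.1 hA
    obtain ⟨q, -, rfl⟩ := mem_image.1 hA'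
    exact hCdisj fun h => hne (congrArg C h)
  · ext x
    simp only [image_biUnion, id, C, mem_biUnion, mem_univ, true_and, ← hBM]
    exact exists_comm

end Blocks

end

theorem stmt_11_general {α : Type*} [DecidableEq α] (k l : ℕ) (hl : 2 ≤ l)
    (M : Fin l → Finset α)
    (hdisj : ∀ i j, i ≠ j → Disjoint (M i) (M j))
    (hcard : ∀ i, (M i).card = k)
    (V : Finset α) (hV : V = Finset.univ.biUnion M)
    (E : Finset (Finset α))
    (hE : ∀ e ∈ E, e ⊆ V ∧ e.card = k)
    -- `{M_1, …, M_ℓ}` is the unique perfect matching of `H = (V, E)`: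
    (huniq : ∀ P : Finset (Finset α),
      P ⊆ E → (∀ e ∈ P, ∀ e' ∈ P, e ≠ e' → Disjoint e e') → P.biUnion id = V →
        P = Finset.univ.image M)
    (a : Fin l → ℕ)
    (hpos : ∀ i, 1 ≤ a i)
    (hsum : ∑ i, a i = k) :
    l * (E.filter
          (fun e => ∃ σ : Equiv.Perm (Fin l), ∀ i, (e ∩ M (σ i)).card = a i)).card ≤
      (l - 1) * ((V.powersetCard k).filter
          (fun A => ∃ σ : Equiv.Perm (Fin l), ∀ i, (A ∩ M (σ i)).card = a i)).card := by
  subst hV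
  have hM : Pairwise (Disjoint on M) := fun i j h => hdisj i j h
  have : NeZero l := ⟨by omega⟩
  have hk : 0 < k := hsum ▸ sum_pos (fun i _ => hpos i) univ_nonempty
  have hV : #(univ.biUnion M) = l * k := by
    rw [card_biUnion fun i _ j _ h => hM h, sum_const_nat fun i _ => hcard i, card_fin]
  have hcov (P) (hP : P ∈ coverings (typeSets M a k) (univ.biUnion M)) : #P = l :=
    card_eq_of_mem_coverings hk (fun A hA => (mem_typeSets.1 hA).2.1) hV hP
  have hnot (P) (hP : P ∈ coverings (typeSets M a k) (univ.biUnion M)) :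
      ¬P ⊆ {e ∈ E | HasType M a e} := fun hPE => by
    obtain ⟨hPG, hPdisj, hPV⟩ := mem_coverings.1 hP
    have hM₀ : M ⟨0, by omega⟩ ∈ P := by
      rw [huniq P (hPE.trans (filter_subset _ _)) hPdisj hPV]
      exact mem_image_of_mem M (mem_univ _)
    exact not_hasType_block hM hl hpos _ (mem_typeSets.1 (hPG hM₀)).2.2
  obtain ⟨P₀, hP₀⟩ := coverings_typeSets_nonempty hM hcard hsum
  obtain ⟨C₀, hC₀⟩ : P₀.Nonempty := card_pos.1 (by rw [hcov P₀ hP₀]; omega)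
  change l * #{e ∈ E | HasType M a e} ≤ (l - 1) * #(typeSets M a k)
  have hTG : {e ∈ E | HasType M a e} ⊆ typeSets M a k := fun e he => by
    obtain ⟨he, hea⟩ := mem_filter.1 he
    exact mem_typeSets.2 ⟨(hE e he).1, (hE e he).2, hea⟩
  exact card_mul_le_of_card_filter_mem_eq hTG (fun P hP => (mem_coverings.1 hP).1) hcov hnot
    (fun C hC => card_filter_mem_coverings_eq hM hcard hC ((mem_coverings.1 hP₀).1 hC₀))
    (card_pos.2 ⟨P₀, mem_filter.2 ⟨hP₀, hC₀⟩⟩)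

theorem stmt_11 {α : Type*} [DecidableEq α] (k l : ℕ) (hk : 2 ≤ k) (hl : 2 ≤ l) (hlk : l ≤ k)
    (M : Fin l → Finset α)
    (hdisj : ∀ i j, i ≠ j → Disjoint (M i) (M j))
    (hcard : ∀ i, (M i).card = k)
    (V : Finset α) (hV : V = Finset.univ.biUnion M)
    (E : Finset (Finset α))
    (hE : ∀ e ∈ E, e ⊆ V ∧ e.card = k)
    (hM : ∀ i, M i ∈ E)
    -- `{M_1, …, M_ℓ}` is the unique perfect matching of `H = (V, E)`:
    (huniq : ∀ P : Finset (Finset α),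
      P ⊆ E → (∀ e ∈ P, ∀ e' ∈ P, e ≠ e' → Disjoint e e') → P.biUnion id = V →
        P = Finset.univ.image M)
    (a : Fin l → ℕ)
    (hmono : ∀ i j : Fin l, i ≤ j → a j ≤ a i)
    (hpos : ∀ i, 1 ≤ a i)
    (hsum : ∑ i, a i = k) :
    l * (E.filter
          (fun e => ∃ σ : Equiv.Perm (Fin l), ∀ i, (e ∩ M (σ i)).card = a i)).card ≤
      (l - 1) * ((V.powersetCard k).filter
          (fun A => ∃ σ : Equiv.Perm (Fin l), ∀ i, (A ∩ M (σ i)).card = a i)).card :=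
  stmt_11_general k l hl M hdisj hcard V hV E hE huniq a hpos hsum
end

section
/- Let k ≥ 2, 2 ≤ ℓ ≤ k, and let H be a k-uniform hypergraph on vertex set V = M_1 ∪ ⋯ ∪ M_ℓ, where {M_1,…,M_ℓ} is the unique perfect matching of H. Then the number of edges of H that intersect all of M_1,…,M_ℓ is at most b_{k,ℓ} = ((ℓ-1)/ℓ) Σ_{i=0}^{ℓ-1} (-1)^i C(ℓ,i) C(k(ℓ-i),k). -/
open Finset

/-!
Index the vertices as the grid `Fin l × Fin k` whose rows are the matching edges, and let `G` be
the group of permutations of the grid that carry every row `i` onto row `i + c`, for some fixed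
`c`. Permuting within rows moves a crossing `k`-set onto a transposed graph `{(f p, p)}` of a map
`f : Fin k → Fin l`, whose `l` cyclic row shifts partition the grid into crossing `k`-sets. Every
image of this partition under `G` is a perfect matching other than `{M_i}`, so one of its `l`
members is not an edge. Averaging over `G`, which preserves the crossing `k`-sets, shows that at
most a fraction `(l - 1) / l` of them are edges; inclusion–exclusion over the rows a `k`-set
misses counts them as `∑ (-1)^i C(l,i) C(k(l-i),k)`.
-/
open Equiv
open scoped Pointwise

/-- Double count the triples `(x, g, c)` with `(g * h c) • x ∈ E`. Substituting `g ↦ g * h c`,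
they number `card ι * card G * #(X ∩ E)`; for each pair `(x, g)` at least one `c` is missing. -/
theorem card_mul_card_inter_add_card_le {G β ι : Type*} [Group G] [Fintype G] [MulAction G β]
    [DecidableEq β] [Fintype ι] {X E : Finset β} (hX : ∀ g : G, ∀ x ∈ X, g • x ∈ X)
    (hbad : ∀ x ∈ X, ∃ h : ι → G, ∀ g : G, ∃ c, (g * h c) • x ∉ E) :
    Fintype.card ι * #(X ∩ E) + #X ≤ Fintype.card ι * #X := by
  classical
  choose! h hh using hbad
  have hperm (g : G) : ∑ x ∈ X, (if g • x ∈ E then 1 else 0) = #(X ∩ E) := by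
    rw [← card_filter]
    refine card_nbij' (g • ·) (g⁻¹ • ·) ?_ ?_ ?_ ?_ <;> intro x hx <;> simp_all
  have hcount : ∑ x ∈ X, ∑ g : G, ∑ c : ι, (if (g * h x c) • x ∈ E then 1 else 0) =
      Fintype.card G * (Fintype.card ι * #(X ∩ E)) := by
    have hshift (x : β) (c : ι) : ∑ g : G, (if (g * h x c) • x ∈ E then 1 else 0) =
        ∑ g : G, (if g • x ∈ E then 1 else 0) :=
      Fintype.sum_equiv (Equiv.mulRight (h x c)) _ _ fun _ => rfl
    simp_rw [sum_comm (s := (univ : Finset G)), hshift, sum_const, card_univ, smul_eq_mul,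
      ← mul_sum, sum_comm (s := X), hperm, sum_const, card_univ, smul_eq_mul]
    ring
  have hmiss (x) (hx : x ∈ X) (g : G) :
      ∑ c : ι, (if (g * h x c) • x ∈ E then 1 else 0) + 1 ≤ Fintype.card ι := by
    rw [← card_filter, Nat.add_one_le_iff, ← card_univ]
    exact card_lt_card (filter_ssubset.2 (by simpa using hh x hx g))
  have := sum_le_sum fun x hx => sum_le_sum fun g (_ : g ∈ univ) => hmiss x hx g
  simp only [sum_add_distrib, hcount, sum_const, card_univ, smul_eq_mul] at this
  refine le_of_mul_le_mul_left (a := Fintype.card G) ?_ Fintype.card_pos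
  linarith

namespace Grid

section Crossing

variable {ι κ : Type*}

def IsCrossing (e : Finset (ι × κ)) : Prop := ∀ i, ∃ p, (i, p) ∈ e

variable [Fintype ι] [DecidableEq ι] [Fintype κ] [DecidableEq κ]

instance : DecidablePred (IsCrossing (ι := ι) (κ := κ)) := fun e =>
  inferInstanceAs (Decidable (∀ i, ∃ p, (i, p) ∈ e))

variable (ι κ) in
def crossingSets : Finset (Finset (ι × κ)) := {e | #e = Fintype.card κ ∧ IsCrossing e}

@[simp]
theorem mem_crossingSets {e : Finset (ι × κ)} :
    e ∈ crossingSets ι κ ↔ #e = Fintype.card κ ∧ IsCrossing e := by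
  simp [crossingSets]

theorem card_crossingSets : (#(crossingSets ι κ) : ℤ) = ∑ j ∈ range (Fintype.card ι + 1),
    (-1 : ℤ) ^ j * (Fintype.card ι).choose j *
      (Fintype.card κ * (Fintype.card ι - j)).choose (Fintype.card κ) := by
  let avoiding (i : ι) : Finset (Finset (ι × κ)) := {e | ∀ p, (i, p) ∉ e}
  have hcross : crossingSets ι κ =
      (univ.inf fun i => (avoiding i)ᶜ).filter (#· = Fintype.card κ) := by
    ext e
    rw [crossingSets, mem_filter, mem_filter]
    simp [avoiding, IsCrossing, mem_inf, and_comm]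
  have hinf (t : Finset ι) : t.inf avoiding = (tᶜ ×ˢ univ).powerset := by
    ext e
    simp only [mem_inf, avoiding, mem_filter, mem_univ, true_and, mem_powerset]
    constructor
    · intro h x hx
      simpa using fun hxt => h x.1 hxt x.2 hx
    · intro h i hi p hp
      simpa [hi] using h hp
  have hterm (t : Finset ι) : (∑ e ∈ t.inf avoiding, if #e = Fintype.card κ then 1 else 0 : ℤ) =
      (Fintype.card κ * (Fintype.card ι - #t)).choose (Fintype.card κ) := by
    rw [hinf, sum_boole, ← powersetCard_eq_filter, card_powersetCard, card_product, card_compl,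
      card_univ, mul_comm]
  rw [hcross, card_filter, Nat.cast_sum, inclusion_exclusion_sum_inf_compl]
  push_cast
  rw [sum_congr rfl fun t _ => congrArg _ (hterm t), sum_powerset_apply_card fun j =>
    (-1 : ℤ) ^ j • ((Fintype.card κ * (Fintype.card ι - j)).choose (Fintype.card κ) : ℤ),
    card_univ]
  refine sum_congr rfl fun j _ => ?_
  rw [nsmul_eq_mul, smul_eq_mul]
  ring

end Crossing

theorem card_crossingSets_fin {k : ℕ} (hk : 0 < k) (l : ℕ) :
    (#(crossingSets (Fin l) (Fin k)) : ℚ) =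
      ∑ i ∈ range l, (-1 : ℚ) ^ i * (l.choose i) * ((k * (l - i)).choose k) := by
  have := congrArg (Int.cast : ℤ → ℚ) (card_crossingSets (ι := Fin l) (κ := Fin k))
  push_cast at this
  rw [this, Fintype.card_fin, Fintype.card_fin, sum_range_succ]
  simp [Nat.choose_eq_zero_of_lt hk]

variable {ι κ : Type*} [AddGroup ι]

variable (ι κ) in
def shiftSubgroup : Subgroup (Perm (ι × κ)) where
  carrier := {σ | ∃ c : ι, ∀ x, (σ x).1 = x.1 + c}
  mul_mem' := by
    rintro σ τ ⟨c, hc⟩ ⟨d, hd⟩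
    exact ⟨d + c, fun x => by simp [hc, hd, add_assoc]⟩
  one_mem' := ⟨0, by simp⟩
  inv_mem' := by
    rintro σ ⟨c, hc⟩
    refine ⟨-c, fun x => ?_⟩
    have := hc (σ⁻¹ x)
    rw [Perm.coe_inv, apply_symm_apply] at this
    rw [Perm.coe_inv, this, add_neg_cancel_right]

def rowShift (c : ι) : Perm (ι × κ) := (Equiv.addRight c).prodCongr (Equiv.refl κ)

theorem rowShift_mem_shiftSubgroup (c : ι) : (rowShift c : Perm (ι × κ)) ∈ shiftSubgroup ι κ :=
  ⟨c, fun _ => rfl⟩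

variable [DecidableEq ι] [DecidableEq κ]

theorem IsCrossing.smul {σ : Perm (ι × κ)}
    (hσ : σ ∈ shiftSubgroup ι κ) {e : Finset (ι × κ)} (he : IsCrossing e) :
    IsCrossing (σ • e) := by
  obtain ⟨c, hc⟩ := hσ
  intro i
  obtain ⟨p, hp⟩ := he (i - c)
  refine ⟨(σ (i - c, p)).2, ?_⟩
  have : (i, (σ (i - c, p)).2) = σ (i - c, p) := Prod.ext (by simp [hc]) rfl
  rw [this]
  exact smul_mem_smul_finset hp

variable [Fintype κ]

theorem smul_mem_crossingSets [Fintype ι] {σ : Perm (ι × κ)} (hσ : σ ∈ shiftSubgroup ι κ)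
    {e : Finset (ι × κ)} (he : e ∈ crossingSets ι κ) : σ • e ∈ crossingSets ι κ := by
  rw [mem_crossingSets] at he ⊢
  exact ⟨(card_smul_finset σ e).trans he.1, he.2.smul hσ⟩

def graph (f : κ → ι) : Finset (ι × κ) := univ.image fun p => (f p, p)

theorem existsUnique_mem_rowShift_smul_graph (f : κ → ι) (x : ι × κ) :
    ∃! c, x ∈ (rowShift c : Perm (ι × κ)) • graph f := by
  refine ⟨-f x.2 + x.1, ?_, ?_⟩ <;> simp only [rowShift, graph, mem_smul_finset, mem_image,
    mem_univ, true_and, exists_exists_eq_and, Perm.smul_def]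
  · exact ⟨x.2, by simp⟩
  · rintro c ⟨p, rfl⟩
    simp

theorem exists_smul_eq_graph {e : Finset (ι × κ)} (he : #e = Fintype.card κ) :
    ∃ σ ∈ shiftSubgroup ι κ, ∃ f : κ → ι, σ • e = graph f := by
  let τ : e ≃ κ := Fintype.equivOfCardEq (by simp [he])
  have hrow (i : ι) : ∃ π : Perm κ, ∀ p : {p // (i, p) ∈ e}, π p = τ ⟨(i, p), p.2⟩ :=
    Perm.exists_extending_pair _ _ Subtype.val_injective fun p p' h =>
      Subtype.ext (by simpa using τ.injective h)
  choose π hπ using hrow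
  refine ⟨(Equiv.refl ι).prodShear π, ⟨0, fun _ => by simp⟩, fun q => (τ.symm q).1.1, ?_⟩
  ext ⟨i, q⟩
  simp only [mem_smul_finset, graph, mem_image, mem_univ, true_and, Perm.smul_def, Prod.mk.injEq]
  constructor
  · rintro ⟨⟨i', p⟩, hp, h⟩
    simp only [prodShear_apply, refl_apply, Prod.mk.injEq] at h
    obtain ⟨rfl, rfl⟩ := h
    refine ⟨_, ?_, rfl⟩
    rw [hπ i' ⟨p, hp⟩, τ.symm_apply_apply]
  · rintro ⟨q, rfl, rfl⟩
    refine ⟨_, (τ.symm q).2, Prod.ext rfl ?_⟩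
    exact (hπ _ ⟨_, (τ.symm q).2⟩).trans (by simp)

theorem card_mul_card_crossingSets_inter_add_card_le [Fintype ι] (E : Finset (Finset (ι × κ)))
    (hE : ∀ C : ι → Finset (ι × κ), (∀ c, C c ∈ crossingSets ι κ) → (∀ x, ∃! c, x ∈ C c) →
      ∃ c, C c ∉ E) :
    Fintype.card ι * #(crossingSets ι κ ∩ E) + #(crossingSets ι κ) ≤
      Fintype.card ι * #(crossingSets ι κ) := by
  classical
  refine card_mul_card_inter_add_card_le (G := shiftSubgroup ι κ)
    (fun g e he => smul_mem_crossingSets g.2 he) fun e he => ?_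
  obtain ⟨σ, hσ, f, hf⟩ := exists_smul_eq_graph (mem_crossingSets.1 he).1
  refine ⟨fun c => ⟨rowShift c, rowShift_mem_shiftSubgroup c⟩ * ⟨σ, hσ⟩, fun g =>
    hE _ (fun c => smul_mem_crossingSets (g * _).2 he) fun x => ?_⟩
  simp only [mul_smul]
  change ∃! c, x ∈ (g : Perm (ι × κ)) • (rowShift c : Perm (ι × κ)) • σ • e
  simp only [hf, ← inv_smul_mem_iff (a := (g : Perm (ι × κ)))]
  exact existsUnique_mem_rowShift_smul_graph f _

end Grid

section Transport

variable {α ι κ : Type*} {M : ι → Finset α}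

theorem exists_embedding_mem_iff {k : ℕ} (hdisj : ∀ i j, i ≠ j → Disjoint (M i) (M j))
    (hcard : ∀ i, #(M i) = k) :
    ∃ ψ : ι × Fin k ↪ α, ∀ i y, y ∈ M i ↔ ∃ p, ψ (i, p) = y := by
  let enum (i : ι) : Fin k ≃ M i := ((M i).equivFinOfCardEq (hcard i)).symm
  have hmem (x : ι × Fin k) : (enum x.1 x.2 : α) ∈ M x.1 := (enum x.1 x.2).2
  refine ⟨⟨fun x => enum x.1 x.2, ?_⟩, fun i y => ⟨fun hy => ⟨(enum i).symm ⟨y, hy⟩, ?_⟩, ?_⟩⟩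
  · rintro ⟨i, p⟩ ⟨j, q⟩ h
    replace h : (enum i p : α) = enum j q := h
    obtain rfl : i = j := by
      by_contra hij
      exact disjoint_left.1 (hdisj i j hij) (hmem (i, p)) (h ▸ hmem (j, q))
    simpa using h
  · exact congrArg Subtype.val ((enum i).apply_symm_apply ⟨y, hy⟩)
  · rintro ⟨p, rfl⟩
    exact hmem (i, p)

variable [DecidableEq α] [Fintype ι] {ψ : ι × κ ↪ α}

theorem map_filter_mem_eq (hψ : ∀ i y, y ∈ M i ↔ ∃ p, ψ (i, p) = y) {e : Finset α}
    (he : e ⊆ univ.biUnion M) [Fintype κ] : ({x | ψ x ∈ e} : Finset (ι × κ)).map ψ = e := by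
  ext y
  simp only [mem_map, mem_filter, mem_univ, true_and]
  refine ⟨fun ⟨x, hx, hxy⟩ => hxy ▸ hx, fun hy => ?_⟩
  obtain ⟨i, -, hi⟩ := mem_biUnion.1 (he hy)
  obtain ⟨p, hp⟩ := (hψ i y).1 hi
  exact ⟨(i, p), hp ▸ hy, hp⟩

theorem exists_map_notMem [Nontrivial ι] (hψ : ∀ i y, y ∈ M i ↔ ∃ p, ψ (i, p) = y)
    {E : Finset (Finset α)}
    (huniq : ∀ P : Finset (Finset α), P ⊆ E → (∀ e ∈ P, ∀ e' ∈ P, e ≠ e' → Disjoint e e') →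
      P.biUnion id = univ.biUnion M → P = univ.image M)
    {C : ι → Finset (ι × κ)} (hC : ∀ c, Grid.IsCrossing (C c)) (hpart : ∀ x, ∃! c, x ∈ C c) :
    ∃ c, (C c).map ψ ∉ E := by
  by_contra! hall
  set P := univ.image fun c => (C c).map ψ
  have hPdisj : ∀ e ∈ P, ∀ e' ∈ P, e ≠ e' → Disjoint e e' := by
    simp only [P, mem_image, mem_univ, true_and]
    rintro _ ⟨c, rfl⟩ _ ⟨c', rfl⟩ hne
    refine (disjoint_map ψ).2 (disjoint_left.2 fun x hx hx' => hne ?_)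
    rw [(hpart x).unique hx hx']
  have hPcover : P.biUnion id = univ.biUnion M := by
    ext y
    simp only [P, mem_biUnion, mem_image, mem_univ, true_and, id, exists_exists_eq_and, mem_map]
    constructor
    · rintro ⟨c, x, -, rfl⟩
      exact ⟨x.1, (hψ _ _).2 ⟨x.2, rfl⟩⟩
    · rintro ⟨i, hy⟩
      obtain ⟨p, rfl⟩ := (hψ i y).1 hy
      obtain ⟨c, hc, -⟩ := hpart (i, p)
      exact ⟨c, (i, p), hc, rfl⟩
  obtain ⟨i₀, i₁, h01⟩ := exists_pair_ne ι
  have hM : M i₀ ∈ P := by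
    rw [huniq P (by simpa [P, subset_iff] using hall) hPdisj hPcover]
    exact mem_image_of_mem M (mem_univ i₀)
  obtain ⟨c, -, hc⟩ := mem_image.1 hM
  obtain ⟨p, hp⟩ := hC c i₁
  obtain ⟨p', hp'⟩ := (hψ i₀ _).1 (hc ▸ mem_map_of_mem ψ hp)
  exact h01 (congrArg Prod.fst (ψ.injective hp'))

theorem card_filter_forall_inter_nonempty_le [DecidableEq ι] [Fintype κ] [DecidableEq κ]
    (hψ : ∀ i y, y ∈ M i ↔ ∃ p, ψ (i, p) = y) {E : Finset (Finset α)}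
    (hE : ∀ e ∈ E, e ⊆ univ.biUnion M ∧ #e = Fintype.card κ)
    [DecidablePred fun e : Finset α => ∀ i, (e ∩ M i).Nonempty] :
    #{e ∈ E | ∀ i, (e ∩ M i).Nonempty} ≤
      #(Grid.crossingSets ι κ ∩ ({e | e.map ψ ∈ E} : Finset (Finset (ι × κ)))) := by
  refine card_le_card_of_injOn (fun e => ({x | ψ x ∈ e} : Finset (ι × κ))) (fun e he => ?_)
    fun e he e' he' h => ?_
  · obtain ⟨heE, hcross⟩ := mem_filter.1 he
    have hmap := map_filter_mem_eq hψ (hE e heE).1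
    simp only [mem_coe, mem_inter, Grid.mem_crossingSets, mem_filter, mem_univ, true_and, hmap]
    refine ⟨⟨by rw [← card_map, hmap, (hE e heE).2], fun i => ?_⟩, heE⟩
    obtain ⟨y, hy⟩ := hcross i
    obtain ⟨p, rfl⟩ := (hψ i y).1 (mem_inter.1 hy).2
    exact ⟨p, by simpa using (mem_inter.1 hy).1⟩
  · rw [← map_filter_mem_eq hψ (hE e (mem_filter.1 he).1).1,
      ← map_filter_mem_eq hψ (hE e' (mem_filter.1 he').1).1]
    exact congrArg _ h

end Transport

theorem stmt_12_general {α : Type*} [DecidableEq α] (k l : ℕ) (hk : 2 ≤ k) (hl : 2 ≤ l)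
    (M : Fin l → Finset α)
    (hdisj : ∀ i j, i ≠ j → Disjoint (M i) (M j))
    (hcard : ∀ i, (M i).card = k)
    (V : Finset α) (hV : V = Finset.univ.biUnion M)
    (E : Finset (Finset α))
    (hE : ∀ e ∈ E, e ⊆ V ∧ e.card = k)
    (huniq : ∀ P : Finset (Finset α),
      P ⊆ E → (∀ e ∈ P, ∀ e' ∈ P, e ≠ e' → Disjoint e e') → P.biUnion id = V →
        P = Finset.univ.image M) :
    ((E.filter (fun e => ∀ i, (e ∩ M i).Nonempty)).card : ℚ) ≤ b k l := by
  have : NeZero l := ⟨by omega⟩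
  have : Nontrivial (Fin l) := Fin.nontrivial_iff_two_le.2 hl
  subst hV
  obtain ⟨ψ, hψ⟩ := exists_embedding_mem_iff hdisj hcard
  have hgrid := Grid.card_mul_card_crossingSets_inter_add_card_le
    ({e | e.map ψ ∈ E} : Finset (Finset (Fin l × Fin k))) fun C hC hpart => by
      simpa using exists_map_notMem hψ huniq (fun c => (Grid.mem_crossingSets.1 (hC c)).2) hpart
  have hle := card_filter_forall_inter_nonempty_le hψ (fun e he => by simpa using hE e he)
  rw [Fintype.card_fin] at hgrid
  rw [b, ← Grid.card_crossingSets_fin (by omega), div_mul_eq_mul_div,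
    le_div_iff₀ (by positivity)]
  have hkey : (l * #(E.filter fun e => ∀ i, (e ∩ M i).Nonempty) +
      #(Grid.crossingSets (Fin l) (Fin k)) : ℚ) ≤ l * #(Grid.crossingSets (Fin l) (Fin k)) := by
    exact_mod_cast Nat.le_trans (Nat.add_le_add_right (Nat.mul_le_mul_left l hle) _) hgrid
  linarith

theorem stmt_12 {α : Type*} [DecidableEq α] (k l : ℕ) (hk : 2 ≤ k) (hl : 2 ≤ l) (hlk : l ≤ k)
    (M : Fin l → Finset α)
    (hdisj : ∀ i j, i ≠ j → Disjoint (M i) (M j))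
    (hcard : ∀ i, (M i).card = k)
    (V : Finset α) (hV : V = Finset.univ.biUnion M)
    (E : Finset (Finset α))
    (hE : ∀ e ∈ E, e ⊆ V ∧ e.card = k)
    (hM : ∀ i, M i ∈ E)
    (huniq : ∀ P : Finset (Finset α),
      P ⊆ E → (∀ e ∈ P, ∀ e' ∈ P, e ≠ e' → Disjoint e e') → P.biUnion id = V →
        P = Finset.univ.image M) :
    ((E.filter (fun e => ∀ i, (e ∩ M i).Nonempty)).card : ℚ) ≤ b k l :=
  stmt_12_general k l hk hl M hdisj hcard V hV E hE huniq
end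

section
/- (Main theorem) Let k ≥ 2, m ≥ 1, and let H be a k-uniform hypergraph on km vertices with a unique perfect matching. Then the number of edges of H is at most f(k,m) = m + Σ_{ℓ=2}^{k} b_{k,ℓ} C(m,ℓ), where b_{k,ℓ} = ((ℓ-1)/ℓ) Σ_{i=0}^{ℓ-1} (-1)^i C(ℓ,i) C(k(ℓ-i),k). -/
/-!
Let `P` be the unique perfect matching and sort the edges by the set `S ⊆ P` of blocks they
meet; `1 ≤ #S ≤ k`, and only the block itself meets a single block. If `#S = l ≥ 2`, the edges
of class `S` contain no `l` pairwise disjoint edges, since these would cover `⋃ S` and replacing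
`S` by them gives a second perfect matching. Such a family is at most a fraction `(l - 1) / l`
of the `k`-sets meeting all `l` blocks, by a Katona-type averaging over "cyclic" partitions of
`⋃ S` into `l` such sets; by inclusion–exclusion over the blocks missed this bound is `b k l`.
Summing over the `m.choose l` classes gives `f k m`.
-/

open Finset

section Averaging

variable {ι X T : Type*} [DecidableEq T] {s : Finset X} {t : Finset T}

theorem sum_div_card_fiber_eq_sum {φ : X → T} (hφ : ∀ x ∈ s, φ x ∈ t)
    (hsurj : ∀ A ∈ t, ∃ x ∈ s, φ x = A) (g : T → ℚ) :
    ∑ x ∈ s, g (φ x) / #{y ∈ s | φ y = φ x} = ∑ A ∈ t, g A := by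
  rw [← sum_fiberwise_of_maps_to hφ]
  refine sum_congr rfl fun A hA => ?_
  have hfiber : #{y ∈ s | φ y = A} ≠ 0 := by
    obtain ⟨x, hx, rfl⟩ := hsurj A hA
    exact card_ne_zero.2 ⟨x, mem_filter.2 ⟨hx, rfl⟩⟩
  rw [sum_congr rfl fun x hx => by rw [(mem_filter.1 hx).2], sum_const, nsmul_eq_mul]
  field_simp

/-- Weighting `x` by the inverse size of its fibre makes every `φ i` count each element of `t`
once, while each `x` contributes at most `card ι - 1` hits in `u`. -/
theorem card_mul_le_of_card_fiber_eq [Fintype ι] [Nonempty ι] {u : Finset T} (φ : ι → X → T)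
    (hφ : ∀ i, ∀ x ∈ s, φ i x ∈ t) (hsurj : ∀ i, ∀ A ∈ t, ∃ x ∈ s, φ i x = A)
    (hfiber : ∀ x ∈ s, ∀ i j, #{y ∈ s | φ i y = φ i x} = #{y ∈ s | φ j y = φ j x})
    (hut : u ⊆ t) (hmiss : ∀ x ∈ s, ∃ i, φ i x ∉ u) :
    (Fintype.card ι * #u : ℚ) ≤ (Fintype.card ι - 1) * #t := by
  obtain ⟨i₀⟩ := ‹Nonempty ι›
  set w : X → ℚ := fun x => #{y ∈ s | φ i₀ y = φ i₀ x}
  have hcount : ∀ i, ∑ x ∈ s, (if φ i x ∈ u then 1 else 0) / w x = #u := fun i =>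
    calc ∑ x ∈ s, (if φ i x ∈ u then 1 else 0) / w x
        = ∑ x ∈ s,
            (if φ i x ∈ u then (1 : ℚ) else 0) / (#{y ∈ s | φ i y = φ i x} : ℕ) :=
          sum_congr rfl fun x hx => by simp only [w, hfiber x hx i i₀]
      _ = #u := by
          rw [sum_div_card_fiber_eq_sum (hφ i) (hsurj i) fun A => if A ∈ u then 1 else 0,
            sum_boole, filter_mem_eq_inter, inter_eq_right.2 hut]
  have hmiss' : ∀ x ∈ s, (#{i | φ i x ∈ u} : ℚ) ≤ Fintype.card ι - 1 := by
    intro x hx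
    obtain ⟨i, hi⟩ := hmiss x hx
    have : #{i | φ i x ∈ u} < Fintype.card ι :=
      card_lt_univ_of_notMem (s := {i | φ i x ∈ u}) (by simpa using hi)
    rw [le_sub_iff_add_le]
    exact_mod_cast this
  calc (Fintype.card ι * #u : ℚ)
      = ∑ i, ∑ x ∈ s, (if φ i x ∈ u then 1 else 0) / w x := by simp [hcount]
    _ = ∑ x ∈ s, #{i | φ i x ∈ u} * (1 / w x) := by
        rw [sum_comm]
        refine sum_congr rfl fun x _ => ?_
        simp only [div_eq_mul_one_div (ite _ _ _), ← sum_mul, sum_boole]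
    _ ≤ ∑ x ∈ s, (Fintype.card ι - 1) * (1 / w x) :=
        sum_le_sum fun x hx => mul_le_mul_of_nonneg_right (hmiss' x hx) (by positivity)
    _ = (Fintype.card ι - 1) * #t := by
        rw [← mul_sum, sum_div_card_fiber_eq_sum (hφ i₀) (hsurj i₀) (fun _ => 1)]
        simp

end Averaging

section Grid

def rowCrossing (l k : ℕ) : Finset (Finset (Fin l × Fin k)) :=
  {A | #A = k ∧ ∀ j, ∃ c, (j, c) ∈ A}

theorem card_rowCrossing (l k : ℕ) :
    (#(rowCrossing l k) : ℤ)
      = ∑ i ∈ range (l + 1), (-1 : ℤ) ^ i * l.choose i * (k * (l - i)).choose k := by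
  set avoid : Fin l → Finset (Finset (Fin l × Fin k)) := fun j => {A | ∀ c, (j, c) ∉ A}
  have hinf : ∀ J : Finset (Fin l), J.inf avoid = ({v | v.1 ∉ J} : Finset _).powerset := by
    intro J
    ext A
    simp only [avoid, mem_inf, mem_filter, mem_univ, true_and, mem_powerset, subset_iff]
    exact ⟨fun h v hv hvJ => h v.1 hvJ v.2 hv, fun h j hj c hc => h hc hj⟩
  have hcard : ∀ J : Finset (Fin l),
      #({v | v.1 ∉ J} : Finset (Fin l × Fin k)) = k * (l - #J) := by
    intro J
    rw [show ({v | v.1 ∉ J} : Finset (Fin l × Fin k)) = Jᶜ ×ˢ univ by ext; simp,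
      card_product, card_compl, card_univ, Fintype.card_fin, Fintype.card_fin, mul_comm]
  calc (#(rowCrossing l k) : ℤ)
      = ∑ A ∈ univ.inf fun j => (avoid j)ᶜ, if #A = k then (1 : ℤ) else 0 := by
        rw [sum_boole]
        congr 2
        ext A
        simp [rowCrossing, avoid, mem_inf, and_comm]
    _ = ∑ J ∈ univ.powerset,
          (-1) ^ #J • ∑ A ∈ J.inf avoid, if #A = k then (1 : ℤ) else 0 :=
        inclusion_exclusion_sum_inf_compl _ _ _
    _ = ∑ J ∈ (univ : Finset (Fin l)).powerset,
          (-1) ^ #J * ((k * (l - #J)).choose k : ℤ) := by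
        refine sum_congr rfl fun J _ => ?_
        rw [hinf, sum_boole, ← powersetCard_eq_filter, card_powersetCard, hcard, smul_eq_mul]
    _ = _ := by
        rw [sum_powerset_apply_card fun i => (-1 : ℤ) ^ i * ((k * (l - i)).choose k : ℤ)]
        simp only [card_univ, Fintype.card_fin, nsmul_eq_mul]
        exact sum_congr rfl fun i _ => by ring

/-- The grid `Fin l × Fin k` models `l` disjoint blocks of size `k`, row `j` being block `j`.
A cutting `(σ, h)` colours `Fin k` by `h` and permutes each row `j` by `σ j`; part `p` takes from
row `j` the cells whose colour after `σ j` is `p + j`, so the `l` parts partition the grid. -/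
abbrev Cutting (l k : ℕ) := (Fin l → Equiv.Perm (Fin k)) × (Fin k → Fin l)

variable {l k : ℕ}

def cuttings (l k : ℕ) : Finset (Cutting l k) :=
  {x | Function.Surjective x.2}

def cyclicPart (x : Cutting l k) (p : Fin l) : Finset (Fin l × Fin k) :=
  {v | x.2 (x.1 v.1 v.2) = p + v.1}

variable {x y : Cutting l k} {p q : Fin l}

@[simp]
theorem mem_cuttings : x ∈ cuttings l k ↔ Function.Surjective x.2 := by
  simp [cuttings]

@[simp]
theorem mem_cyclicPart {v : Fin l × Fin k} :
    v ∈ cyclicPart x p ↔ x.2 (x.1 v.1 v.2) = p + v.1 := by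
  simp [cyclicPart]

theorem disjoint_cyclicPart (x : Cutting l k) (hpq : p ≠ q) :
    Disjoint (cyclicPart x p) (cyclicPart x q) :=
  disjoint_filter.2 fun _ _ hp hq => hpq (add_right_cancel (hp.symm.trans hq))

theorem exists_mem_cyclicPart (hx : Function.Surjective x.2) (p j : Fin l) :
    ∃ c, (j, c) ∈ cyclicPart x p := by
  obtain ⟨c, hc⟩ := hx (p + j)
  exact ⟨(x.1 j).symm c, by simpa using hc⟩

theorem mem_map_rowCrossing {α : Type*} [DecidableEq α] (ε : Fin l × Fin k ↪ α)
    {e : Finset α} (he : e ⊆ univ.map ε) (hek : #e = k) (hrow : ∀ j, ∃ c, ε (j, c) ∈ e) :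
    e ∈ (rowCrossing l k).map (mapEmbedding ε).toEmbedding := by
  have hpre : ({v | ε v ∈ e} : Finset _).map ε = e := by
    ext a
    simp only [mem_map, mem_filter, mem_univ, true_and]
    refine ⟨fun ⟨v, hv, hva⟩ => hva ▸ hv, fun ha => ?_⟩
    obtain ⟨v, -, rfl⟩ := mem_map.1 (he ha)
    exact ⟨v, ha, rfl⟩
  refine mem_map.2 ⟨_, ?_, hpre⟩
  simp only [rowCrossing, mem_filter, mem_univ, true_and]
  exact ⟨by rw [← card_map ε, hpre, hek], hrow⟩

variable [NeZero l]

theorem card_cyclicPart (x : Cutting l k) (p : Fin l) :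
    #(cyclicPart x p) = k := by
  calc #(cyclicPart x p)
      = ∑ j, ∑ c, if x.2 (x.1 j c) = p + j then 1 else 0 := by
        rw [cyclicPart, card_filter, Fintype.sum_prod_type]
    _ = ∑ j, ∑ c, if x.2 c = p + j then 1 else 0 :=
        sum_congr rfl fun j _ => Equiv.sum_comp (x.1 j) fun c => if x.2 c = p + j then 1 else 0
    _ = ∑ c, ∑ j, if j = x.2 c - p then 1 else 0 := by
        rw [sum_comm]
        simp only [eq_sub_iff_add_eq', eq_comm]
    _ = k := by simp

theorem cyclicPart_mem_rowCrossing (hx : x ∈ cuttings l k) (p : Fin l) :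
    cyclicPart x p ∈ rowCrossing l k := by
  rw [mem_cuttings] at hx
  simpa [rowCrossing, card_cyclicPart] using exists_mem_cyclicPart hx p

theorem exists_cyclicPart_eq {A : Finset (Fin l × Fin k)} (hA : A ∈ rowCrossing l k)
    (p : Fin l) :
    ∃ x ∈ cuttings l k, cyclicPart x p = A := by
  simp only [rowCrossing, mem_filter, mem_univ, true_and] at hA
  obtain ⟨hAk, hrow⟩ := hA
  -- Number the cells of `A` by `β`, colour each number by the row of its cell shifted by `p`,
  -- and let `σ j` carry row `j` of `A` onto the numbers of its cells.
  let β : A ≃ Fin k := A.equivFinOfCardEq hAk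
  let e : ∀ j, {c // (j, c) ∈ A} ≃ {c // (β.symm c).1.1 = j} := fun j =>
    { toFun := fun c => ⟨β ⟨(j, c), c.2⟩, by simp⟩
      invFun := fun c => ⟨(β.symm c).1.2, by simp [← c.2]⟩
      left_inv := fun c => by simp
      right_inv := fun c => by
        obtain ⟨c, hc⟩ := c
        ext
        simp [← hc] }
  refine ⟨(fun j => (e j).extendSubtype, fun c => p + (β.symm c).1.1), ?_, ?_⟩
  · rw [mem_cuttings]
    intro q
    obtain ⟨c, hc⟩ := hrow (q - p)
    exact ⟨β ⟨(q - p, c), hc⟩, by simp⟩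
  · ext ⟨j, c⟩
    simp only [mem_cyclicPart, add_right_inj]
    by_cases hc : (j, c) ∈ A
    · simp [hc, Equiv.extendSubtype_mem (e j) c hc]
    · simp [hc, Equiv.extendSubtype_not_mem (e j) c hc]

/-- Moves the fibre of `cyclicPart · p` through `cyclicPart x p` to the fibre of
`cyclicPart · (p - δ)` through `cyclicPart x (p - δ)`. -/
def cyclicShift (x : Cutting l k) (δ : Fin l) (y : Cutting l k) : Cutting l k :=
  (fun j => y.1 (j - δ) * (x.1 (j - δ))⁻¹ * x.1 j, y.2)

theorem cyclicShift_cyclicShift {δ δ' : Fin l} (hδ : δ + δ' = 0) :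
    cyclicShift x δ' (cyclicShift x δ y) = y := by
  have hj : ∀ j : Fin l, j - δ' - δ = j := fun j => by rw [sub_sub, add_comm, hδ, sub_zero]
  ext j : 2
  · simp [cyclicShift, hj, mul_assoc]
  · rfl

theorem cyclicPart_cyclicShift (h : cyclicPart y p = cyclicPart x p) (δ : Fin l) :
    cyclicPart (cyclicShift x δ y) (p - δ) = cyclicPart x (p - δ) := by
  ext ⟨j, c⟩
  have hmem := congrArg (((j - δ, (x.1 (j - δ))⁻¹ (x.1 j c))) ∈ ·) h
  simp only [mem_cyclicPart, Equiv.Perm.coe_inv, Equiv.apply_symm_apply, eq_iff_iff] at hmem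
  simpa [cyclicShift, show p - δ + j = p + (j - δ) by abel] using hmem

theorem cyclicShift_mem_filter (hy : y ∈ {y ∈ cuttings l k | cyclicPart y p = cyclicPart x p})
    (δ : Fin l) :
    cyclicShift x δ y ∈
      {y ∈ cuttings l k | cyclicPart y (p - δ) = cyclicPart x (p - δ)} := by
  rw [mem_filter] at hy ⊢
  exact ⟨by simpa [cyclicShift] using hy.1, cyclicPart_cyclicShift hy.2 δ⟩

theorem card_filter_cyclicPart_eq (x : Cutting l k)
    (p q : Fin l) :
    #{y ∈ cuttings l k | cyclicPart y p = cyclicPart x p}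
      = #{y ∈ cuttings l k | cyclicPart y q = cyclicPart x q} := by
  refine card_nbij' (cyclicShift x (p - q)) (cyclicShift x (q - p)) ?_ ?_ ?_ ?_
  · intro y hy
    simpa using cyclicShift_mem_filter hy (p - q)
  · intro y hy
    simpa using cyclicShift_mem_filter hy (q - p)
  · exact fun y _ => cyclicShift_cyclicShift (by abel)
  · exact fun y _ => cyclicShift_cyclicShift (by abel)

theorem cyclicPart_injective (hx : x ∈ cuttings l k) : Function.Injective (cyclicPart x) := by
  intro p q hpq
  by_contra h
  obtain ⟨c, hc⟩ := exists_mem_cyclicPart (mem_cuttings.1 hx) p 0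
  exact disjoint_left.1 (disjoint_cyclicPart x h) hc (hpq ▸ hc)

theorem card_mul_le_card_rowCrossing {α : Type*} [DecidableEq α] (ε : Fin l × Fin k ↪ α)
    {u : Finset (Finset α)} (hu : u ⊆ (rowCrossing l k).map (mapEmbedding ε).toEmbedding)
    (hno : ∀ Q ⊆ u, (Q : Set (Finset α)).PairwiseDisjoint id → #Q ≠ l) :
    (l * #u : ℚ) ≤ (l - 1) * #(rowCrossing l k) := by
  have := card_mul_le_of_card_fiber_eq (s := cuttings l k) (fun p x => (cyclicPart x p).map ε)
    (fun p x hx => mem_map_of_mem _ (cyclicPart_mem_rowCrossing hx p)) ?_ ?_ hu ?_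
  · simpa using this
  · intro p A hA
    obtain ⟨A', hA', rfl⟩ := mem_map.1 hA
    obtain ⟨x, hx, rfl⟩ := exists_cyclicPart_eq hA' p
    exact ⟨x, hx, rfl⟩
  · intro x _ p q
    simp only [map_inj]
    exact card_filter_cyclicPart_eq x p q
  · intro x hx
    by_contra! hall
    refine hno (univ.image fun p => (cyclicPart x p).map ε) ?_ ?_ ?_
    · simpa [image_subset_iff] using hall
    · simp only [coe_image, coe_univ, Set.image_univ]
      rintro _ ⟨p, rfl⟩ _ ⟨q, rfl⟩ hpq
      exact (disjoint_map ε).2 (disjoint_cyclicPart x fun h => hpq (h ▸ rfl))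
    · rw [card_image_of_injective (f := fun p => (cyclicPart x p).map ε) univ
        ((map_injective ε).comp (cyclicPart_injective hx)), card_univ, Fintype.card_fin]

end Grid

section Blocks

variable {α : Type*} [DecidableEq α] {k : ℕ}

theorem exists_embedding_rows {S : Finset (Finset α)} (hS : ∀ s ∈ S, #s = k)
    (hSd : (S : Set (Finset α)).PairwiseDisjoint id) :
    ∃ ε : Fin #S × Fin k ↪ α, S = univ.image fun j => univ.image fun c => ε (j, c) := by
  let e : Fin #S ≃ S := S.equivFin.symm
  let g : ∀ j, Fin k ≃ (e j : Finset α) := fun j =>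
    ((e j : Finset α).equivFinOfCardEq (hS _ (e j).2)).symm
  have hrow : ∀ j, (univ.image fun c => (g j c : α)) = e j := by
    intro j
    ext a
    simp only [mem_image, mem_univ, true_and]
    exact ⟨fun ⟨c, hc⟩ => hc ▸ (g j c).2, fun ha => ⟨(g j).symm ⟨a, ha⟩, by simp⟩⟩
  have hinj : Function.Injective fun v : Fin #S × Fin k => (g v.1 v.2 : α) := by
    rintro ⟨j, c⟩ ⟨j', c'⟩ h
    simp only at h
    obtain rfl : j = j' := by
      by_contra hjj
      have hd := hSd (e j).2 (e j').2 fun h' => hjj (e.injective (Subtype.ext h'))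
      exact disjoint_left.1 hd (g j c).2 (h ▸ (g j' c').2)
    simpa using (g j).injective (Subtype.ext h)
  refine ⟨⟨_, hinj⟩, ?_⟩
  ext s
  change s ∈ S ↔ s ∈ univ.image fun j => univ.image fun c => (g j c : α)
  simp only [hrow, mem_image, mem_univ, true_and]
  exact ⟨fun hs => ⟨e.symm ⟨s, hs⟩, by simp⟩, fun ⟨j, hj⟩ => hj ▸ (e j).2⟩

theorem card_le_b {S u : Finset (Finset α)} (hk : 0 < k) (hS : ∀ s ∈ S, #s = k)
    (hSd : (S : Set (Finset α)).PairwiseDisjoint id)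
    (hu : ∀ e ∈ u, e ⊆ S.biUnion id ∧ #e = k ∧ ∀ s ∈ S, (e ∩ s).Nonempty)
    (hno : ∀ Q ⊆ u, (Q : Set (Finset α)).PairwiseDisjoint id → #Q ≠ #S) :
    (#u : ℚ) ≤ b k #S := by
  have hl : #S ≠ 0 := fun h => hno ∅ (empty_subset u) (by simp) (by simp [h])
  have : NeZero #S := ⟨hl⟩
  obtain ⟨ε, hε⟩ := exists_embedding_rows hS hSd
  have hsub : u ⊆ (rowCrossing #S k).map (mapEmbedding ε).toEmbedding := by
    intro e he
    obtain ⟨heS, hek, hmeet⟩ := hu e he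
    refine mem_map_rowCrossing ε ?_ hek fun j => ?_
    · intro a ha
      obtain ⟨s, hs, has⟩ := mem_biUnion.1 (heS ha)
      rw [hε] at hs
      obtain ⟨j, -, rfl⟩ := mem_image.1 hs
      obtain ⟨c, -, rfl⟩ := mem_image.1 has
      exact mem_map_of_mem ε (mem_univ _)
    · have hj := mem_image_of_mem (fun j => univ.image fun c => ε (j, c)) (mem_univ j)
      rw [← hε] at hj
      obtain ⟨a, ha⟩ := hmeet _ hj
      obtain ⟨c, -, rfl⟩ := mem_image.1 (mem_inter.1 ha).2
      exact ⟨c, (mem_inter.1 ha).1⟩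
  have hav := card_mul_le_card_rowCrossing ε hsub hno
  have hcount : (#(rowCrossing #S k) : ℚ) = ∑ i ∈ range #S,
      (-1 : ℚ) ^ i * (#S).choose i * (k * (#S - i)).choose k := by
    have := card_rowCrossing #S k
    rw [sum_range_succ, Nat.sub_self, mul_zero, Nat.choose_eq_zero_of_lt hk] at this
    exact_mod_cast (by simpa using this)
  rw [b, ← hcount, div_mul_eq_mul_div, le_div_iff₀ (by positivity)]
  linarith

end Blocks

section PerfectMatching

variable {α : Type*} [DecidableEq α]

def IsPerfectMatching (E : Finset (Finset α)) (V : Finset α) (P : Finset (Finset α)) : Prop :=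
  P ⊆ E ∧ (P : Set (Finset α)).PairwiseDisjoint id ∧ P.biUnion id = V

def blocksMeeting (P : Finset (Finset α)) (e : Finset α) : Finset (Finset α) :=
  {s ∈ P | (e ∩ s).Nonempty}

variable {E P S Q : Finset (Finset α)} {V e : Finset α} {k : ℕ}

theorem card_biUnion_of_card_eq (hP : (P : Set (Finset α)).PairwiseDisjoint id)
    (hk : ∀ s ∈ P, #s = k) : #(P.biUnion id) = #P * k := by
  rw [card_biUnion hP, ← smul_eq_mul, ← sum_const]
  exact sum_congr rfl hk

theorem subset_biUnion_blocksMeeting (he : e ⊆ P.biUnion id) :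
    e ⊆ (blocksMeeting P e).biUnion id := by
  intro a ha
  obtain ⟨s, hs, has⟩ := mem_biUnion.1 (he ha)
  exact mem_biUnion.2 ⟨s, mem_filter.2 ⟨hs, a, mem_inter.2 ⟨ha, has⟩⟩, has⟩

theorem blocksMeeting_nonempty (he : e ⊆ P.biUnion id) (hne : e.Nonempty) :
    (blocksMeeting P e).Nonempty := by
  obtain ⟨a, ha⟩ := hne
  obtain ⟨s, hs, -⟩ := mem_biUnion.1 (subset_biUnion_blocksMeeting he ha)
  exact ⟨s, hs⟩

theorem card_blocksMeeting_le (hP : (P : Set (Finset α)).PairwiseDisjoint id) :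
    #(blocksMeeting P e) ≤ #e :=
  calc #(blocksMeeting P e)
      = ∑ _s ∈ blocksMeeting P e, 1 := by simp
    _ ≤ ∑ s ∈ blocksMeeting P e, #(e ∩ s) :=
        sum_le_sum fun s hs => card_pos.2 (mem_filter.1 hs).2
    _ = #((blocksMeeting P e).biUnion (e ∩ ·)) :=
        (card_biUnion ((hP.subset (filter_subset _ P)).mono fun _ => inter_subset_right)).symm
    _ ≤ #e := card_le_card (biUnion_subset.2 fun _ _ => inter_subset_left)

theorem blocksMeeting_of_mem (hP : (P : Set (Finset α)).PairwiseDisjoint id) {s : Finset α}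
    (hs : s ∈ P) (hne : s.Nonempty) : blocksMeeting P s = {s} := by
  ext t
  simp only [blocksMeeting, mem_filter, mem_singleton]
  refine ⟨fun ⟨ht, hst⟩ => ?_, by rintro rfl; exact ⟨hs, by rwa [inter_self]⟩⟩
  by_contra h
  exact not_disjoint_iff_nonempty_inter.2 hst (hP hs ht (Ne.symm h))

theorem IsPerfectMatching.sdiff_union (hP : IsPerfectMatching E V P) (hSP : S ⊆ P) (hQE : Q ⊆ E)
    (hQ : (Q : Set (Finset α)).PairwiseDisjoint id) (hQS : Q.biUnion id = S.biUnion id) :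
    IsPerfectMatching E V (P \ S ∪ Q) := by
  obtain ⟨hPE, hPd, hPV⟩ := hP
  refine ⟨union_subset (sdiff_subset.trans hPE) hQE, ?_, ?_⟩
  · rw [coe_union]
    refine (hPd.subset (by simp)).union hQ fun x hx q hq _ => ?_
    obtain ⟨hxP, hxS⟩ := mem_sdiff.1 hx
    have hxS : Disjoint x (S.biUnion id) := (disjoint_biUnion_right _ _ _).2 fun s hs =>
      hPd hxP (hSP hs) fun h => hxS (h ▸ hs)
    exact hxS.mono_right (hQS ▸ subset_biUnion_of_mem id hq)
  · rw [union_biUnion, hQS, ← union_biUnion, sdiff_union_of_subset hSP, hPV]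

theorem IsPerfectMatching.card_filter_blocksMeeting_le_b (hP : IsPerfectMatching E V P)
    (huniq : ∀ P', IsPerfectMatching E V P' → P' = P) (hE : ∀ e ∈ E, e ⊆ V ∧ #e = k)
    (hk : 0 < k) (hSP : S ⊆ P) (hS : 2 ≤ #S) :
    (#{e ∈ E | blocksMeeting P e = S} : ℚ) ≤ b k #S := by
  have hSk : ∀ s ∈ S, #s = k := fun s hs => (hE s (hP.1 (hSP hs))).2
  have hSd : (S : Set (Finset α)).PairwiseDisjoint id := hP.2.1.subset (coe_subset.2 hSP)
  have hmem : ∀ e ∈ {e ∈ E | blocksMeeting P e = S},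
      e ⊆ S.biUnion id ∧ #e = k ∧ ∀ s ∈ S, (e ∩ s).Nonempty := by
    intro e he
    obtain ⟨heE, rfl⟩ := mem_filter.1 he
    exact ⟨subset_biUnion_blocksMeeting (hP.2.2 ▸ (hE e heE).1), (hE e heE).2,
      fun s hs => (mem_filter.1 hs).2⟩
  refine card_le_b hk hSk hSd hmem fun Q hQ hQd hQS => ?_
  have hQk : ∀ q ∈ Q, #q = k := fun q hq => (hmem q (hQ hq)).2.1
  have hcover : Q.biUnion id = S.biUnion id :=
    eq_of_subset_of_card_le (biUnion_subset.2 fun q hq => (hmem q (hQ hq)).1)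
      (by rw [card_biUnion_of_card_eq hQd hQk, card_biUnion_of_card_eq hSd hSk, hQS])
  have hswap := huniq _ (hP.sdiff_union hSP (fun q hq => (mem_filter.1 (hQ hq)).1) hQd hcover)
  obtain ⟨q, hq⟩ : Q.Nonempty := card_pos.1 (by omega)
  have hqS := (mem_filter.1 (hQ hq)).2
  rw [blocksMeeting_of_mem hP.2.1 (hswap ▸ mem_union_right _ hq)
    (card_pos.1 ((hQk q hq).symm ▸ hk))] at hqS
  simp [← hqS] at hS

/-- Bound on the number of edges meeting exactly a given set of `i` blocks. -/
def fiberBound (k i : ℕ) : ℚ :=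
  if i = 1 then 1 else if i ∈ Icc 2 k then b k i else 0

theorem IsPerfectMatching.card_filter_blocksMeeting_le (hP : IsPerfectMatching E V P)
    (huniq : ∀ P', IsPerfectMatching E V P' → P' = P) (hE : ∀ e ∈ E, e ⊆ V ∧ #e = k)
    (hk : 0 < k) (hSP : S ⊆ P) :
    (#{e ∈ E | blocksMeeting P e = S} : ℚ) ≤ fiberBound k #S := by
  unfold fiberBound
  split_ifs with h1 h2
  · obtain ⟨s, rfl⟩ := card_eq_one.1 h1
    have hsub : {e ∈ E | blocksMeeting P e = {s}} ⊆ {s} := by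
      intro e he
      obtain ⟨heE, hes⟩ := mem_filter.1 he
      have hes' := subset_biUnion_blocksMeeting (hP.2.2 ▸ (hE e heE).1)
      rw [hes, singleton_biUnion] at hes'
      refine mem_singleton.2 (eq_of_subset_of_card_le hes' ?_)
      rw [(hE e heE).2, (hE s (hP.1 (hSP (mem_singleton_self s)))).2]
    exact_mod_cast (card_le_card hsub).trans (card_singleton s).le
  · exact hP.card_filter_blocksMeeting_le_b huniq hE hk hSP (mem_Icc.1 h2).1
  · rw [Nat.cast_nonpos, card_eq_zero, filter_eq_empty_iff]
    intro e heE hes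
    have hne :=
      blocksMeeting_nonempty (hP.2.2 ▸ (hE e heE).1) (card_pos.1 ((hE e heE).2 ▸ hk))
    have hle := (card_blocksMeeting_le (e := e) hP.2.1).trans (hE e heE).2.le
    rw [hes] at hne hle
    have := card_pos.2 hne
    simp only [mem_Icc, not_and, not_le] at h2
    omega

end PerfectMatching

theorem sum_choose_mul_fiberBound (k m : ℕ) :
    ∑ i ∈ range (m + 1), m.choose i * fiberBound k i = f k m := by
  have hsplit : ∀ i,
      fiberBound k i = (if i = 1 then 1 else 0) + if i ∈ Icc 2 k then b k i else 0 := by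
    intro i
    unfold fiberBound
    split_ifs <;> simp_all
  simp only [hsplit, mul_add, sum_add_distrib, mul_ite, mul_one, mul_zero, f]
  congr 1
  · rw [sum_ite_eq']
    rcases m with _ | m <;> simp
  · rw [sum_ite_mem, sum_subset inter_subset_right fun i hi hni => ?_]
    · exact sum_congr rfl fun i _ => mul_comm _ _
    · have : m < i := by simpa [hi] using hni
      simp [Nat.choose_eq_zero_of_lt this]

theorem stmt_13_general {α : Type*} [DecidableEq α] (k m : ℕ) (hk : 2 ≤ k)
    (V : Finset α) (hV : V.card = k * m)
    (E : Finset (Finset α))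
    (hE : ∀ e ∈ E, e ⊆ V ∧ e.card = k)
    (huniq : ∃! P : Finset (Finset α),
      P ⊆ E ∧ (∀ e ∈ P, ∀ e' ∈ P, e ≠ e' → Disjoint e e') ∧ P.biUnion id = V) :
    (E.card : ℚ) ≤ f k m := by
  obtain ⟨P, hP, hPuniq⟩ := huniq
  have hP : IsPerfectMatching E V P := hP
  have hk₀ : 0 < k := by omega
  have hPm : #P = m := by
    have := card_biUnion_of_card_eq hP.2.1 fun s hs => (hE s (hP.1 hs)).2
    rw [hP.2.2, hV, mul_comm] at this
    exact (Nat.eq_of_mul_eq_mul_right hk₀ this).symm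
  calc (#E : ℚ)
      = ∑ S ∈ P.powerset, (#{e ∈ E | blocksMeeting P e = S} : ℚ) := by
        exact_mod_cast card_eq_sum_card_fiberwise fun e _ => mem_powerset.2 (filter_subset _ P)
    _ ≤ ∑ S ∈ P.powerset, fiberBound k #S :=
        sum_le_sum fun S hS =>
          hP.card_filter_blocksMeeting_le hPuniq hE hk₀ (mem_powerset.1 hS)
    _ = f k m := by
        rw [sum_powerset_apply_card, hPm, ← sum_choose_mul_fiberBound]
        simp

theorem stmt_13 {α : Type*} [DecidableEq α] (k m : ℕ) (hk : 2 ≤ k) (hm : 1 ≤ m)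
    (V : Finset α) (hV : V.card = k * m)
    (E : Finset (Finset α))
    (hE : ∀ e ∈ E, e ⊆ V ∧ e.card = k)
    (huniq : ∃! P : Finset (Finset α),
      P ⊆ E ∧ (∀ e ∈ P, ∀ e' ∈ P, e ≠ e' → Disjoint e e') ∧ P.biUnion id = V) :
    (E.card : ℚ) ≤ f k m :=
  stmt_13_general k m hk V hV E hE huniq
end

section
/- (Hetyei's bound) A graph on 2m vertices with a unique perfect matching has at most m² edges. -/
/-!
Let `f` be the partner map of the unique perfect matching. If `a ~ b` with `b ≠ f a`, then
`f a` and `f b` are not adjacent, since otherwise exchanging the edges of the alternating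
4-cycle `a - b - f b - f a` would give a second perfect matching. Hence the neighbourhood of `a`
and the `f`-image of the neighbourhood of `f a` meet at most in `f a` and both avoid `a`, so
`deg a + deg (f a) ≤ 2m`. Summing over `a` gives `4 |E| ≤ (2m)²`.
-/
open Finset

namespace SimpleGraph

variable {V : Type*} {G : SimpleGraph V}

theorem Subgraph.IsPerfectMatching.exists_involutive_adj_iff {M : G.Subgraph}
    (hM : M.IsPerfectMatching) :
    ∃ f : V → V, Function.Involutive f ∧ ∀ v w, M.Adj v w ↔ w = f v := by
  choose f hf using Subgraph.isPerfectMatching_iff.mp hM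
  have hadj_iff : ∀ v w, M.Adj v w ↔ w = f v := fun v w =>
    ⟨(hf v).2 w, fun h => h ▸ (hf v).1⟩
  exact ⟨f, fun v => ((hadj_iff _ _).mp ((hf v).1.symm)).symm, hadj_iff⟩

theorem exists_isPerfectMatching_of_involutive {f : V → V} (hf : Function.Involutive f)
    (hadj : ∀ v, G.Adj v (f v)) :
    ∃ M : G.Subgraph, M.IsPerfectMatching ∧ ∀ v w, M.Adj v w ↔ w = f v := by
  let M : G.Subgraph :=
    { verts := Set.univ
      Adj := fun v w => w = f v
      adj_sub := by rintro v _ rfl; exact hadj v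
      edge_vert := fun _ => Set.mem_univ _
      symm := ⟨by rintro v _ rfl; exact (hf v).symm⟩ }
  exact ⟨M, Subgraph.isPerfectMatching_iff.mpr fun v => ⟨f v, rfl, fun _ h => h⟩,
    fun _ _ => Iff.rfl⟩

theorem eq_of_adj_of_adj_of_unique_isPerfectMatching {M : G.Subgraph}
    (huniq : ∀ M' : G.Subgraph, M'.IsPerfectMatching → M' = M) {f : V → V}
    (hf : Function.Involutive f) (hMf : ∀ v w, M.Adj v w ↔ w = f v)
    {a b : V} (hab : G.Adj a b) (hfab : G.Adj (f a) (f b)) : b = f a := by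
  classical
  by_contra hb
  have hpartner : ∀ v, G.Adj v (f v) := fun v => M.adj_sub ((hMf v _).mpr rfl)
  -- `τ ∘ f ∘ τ` pairs `a` with `b` and `f a` with `f b`, and agrees with `f` elsewhere.
  let τ := Equiv.swap (f a) b
  have hg : Function.Involutive (τ ∘ f ∘ τ) := fun v => by
    simp only [Function.comp_apply, τ, Equiv.swap_apply_self, hf _]
  have hgadj : ∀ v, G.Adj v ((τ ∘ f ∘ τ) v) := by
    intro v
    simp only [Function.comp_apply, τ, Equiv.swap_apply_def]
    split_ifs <;> grind [Function.Involutive, Adj.symm, Adj.ne]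
  obtain ⟨M', hM', hM'g⟩ := exists_isPerfectMatching_of_involutive hg hgadj
  have hga : (τ ∘ f ∘ τ) a = b := by
    simp only [Function.comp_apply, τ, Equiv.swap_apply_of_ne_of_ne (hpartner a).ne hab.ne,
      Equiv.swap_apply_left]
  apply hb
  rw [← hMf, ← huniq M' hM', hM'g, hga]

variable [Fintype V] [DecidableRel G.Adj]

theorem degree_add_degree_le_card {f : V → V} (hf : Function.Involutive f)
    (halt : ∀ a b, G.Adj a b → G.Adj (f a) (f b) → b = f a) (a : V) :
    G.degree a + G.degree (f a) ≤ Fintype.card V := by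
  classical
  set N := G.neighborFinset a
  set N' := (G.neighborFinset (f a)).image f
  have hinter : N ∩ N' ⊆ {f a} := by
    intro b hb
    simp only [N, N', mem_inter, mem_neighborFinset, mem_image] at hb
    obtain ⟨hab, c, hfac, rfl⟩ := hb
    rw [mem_singleton, ← halt a (f c) hab (by rwa [hf c])]
  have hunion : N ∪ N' ⊆ univ.erase a := by
    intro b hb
    simp only [N, N', mem_union, mem_neighborFinset, mem_image] at hb
    rw [mem_erase]
    refine ⟨?_, mem_univ b⟩
    rintro rfl
    rcases hb with hbb | ⟨c, hfac, hfc⟩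
    · exact hbb.ne rfl
    · rw [← hfc, hf c] at hfac
      exact hfac.ne rfl
  have hN' : #N' = G.degree (f a) := by
    rw [card_image_of_injective _ hf.injective, card_neighborFinset_eq_degree]
  calc G.degree a + G.degree (f a) = #(N ∪ N') + #(N ∩ N') := by
        rw [card_union_add_card_inter, hN', card_neighborFinset_eq_degree]
    _ ≤ #(univ.erase a) + #{f a} := add_le_add (card_le_card hunion) (card_le_card hinter)
    _ = Fintype.card V := by
        rw [card_erase_of_mem (mem_univ a), card_singleton, card_univ]
        exact Nat.sub_add_cancel (Fintype.card_pos_iff.mpr ⟨a⟩)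

theorem four_mul_card_edgeFinset_le {f : V → V} (hf : Function.Involutive f)
    (halt : ∀ a b, G.Adj a b → G.Adj (f a) (f b) → b = f a) :
    4 * #G.edgeFinset ≤ Fintype.card V ^ 2 := by
  calc 4 * #G.edgeFinset = ∑ v, G.degree v + ∑ v, G.degree (f v) := by
        rw [hf.bijective.sum_comp (fun v => G.degree v), ← two_mul,
          sum_degrees_eq_twice_card_edges]
        ring
    _ ≤ ∑ _v : V, Fintype.card V := by
        rw [← sum_add_distrib]
        exact sum_le_sum fun v _ => degree_add_degree_le_card hf halt v
    _ = Fintype.card V ^ 2 := by rw [sum_const, card_univ, smul_eq_mul, sq]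

end SimpleGraph

theorem stmt_14 (m : ℕ) (G : SimpleGraph (Fin (2 * m))) [DecidableRel G.Adj]
    (h : ∃! M : G.Subgraph, M.IsPerfectMatching) :
    G.edgeFinset.card ≤ m ^ 2 := by
  obtain ⟨M, hM, huniq⟩ := h
  obtain ⟨f, hf, hMf⟩ := hM.exists_involutive_adj_iff
  have hedges := SimpleGraph.four_mul_card_edgeFinset_le hf fun a b hab hfab =>
    SimpleGraph.eq_of_adj_of_adj_of_unique_isPerfectMatching huniq hf hMf hab hfab
  rw [Fintype.card_fin] at hedges
  nlinarith
end

section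
/- For every k ≥ 2 and 2 ≤ ℓ ≤ k, the quantity b_{k,ℓ} = ((ℓ-1)/ℓ) Σ_{i=0}^{ℓ-1} (-1)^i C(ℓ,i) C(k(ℓ-i),k) is a nonnegative integer; equivalently, ℓ divides (ℓ-1)·Σ_{i=0}^{ℓ-1} (-1)^i C(ℓ,i) C(k(ℓ-i),k). -/
/-!
Inclusion–exclusion over the rows of the grid `Fin l × Fin k` shows that
`∑_{i<l} (-1)^i C(l,i) C(k(l-i),k)` counts the `k`-subsets of the grid meeting every row, so it is
nonnegative. Each term is divisible by `l`: by absorption, `C(l,i) (l-i) = l C(l-1,i)` and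
`C(kj,k) = j C(kj-1,k-1)`.
-/

open Finset

theorem Nat.choose_mul_sub_self (n k : ℕ) : n.choose k * (n - k) = n * (n - 1).choose k := by
  rcases n with _ | n
  · simp
  · simpa [mul_comm] using (Nat.choose_mul_succ_eq n k).symm

theorem Nat.choose_mul_self_left {k : ℕ} (hk : 0 < k) (j : ℕ) :
    (k * j).choose k = j * (k * j - 1).choose (k - 1) := by
  rcases j.eq_zero_or_pos with rfl | hj
  · simp [Nat.choose_eq_zero_of_lt hk]
  · have h := Nat.add_one_mul_choose_eq (k * j - 1) (k - 1)
    rw [Nat.sub_add_cancel (Nat.mul_pos hk hj), Nat.sub_add_cancel hk] at h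
    apply Nat.eq_of_mul_eq_mul_left hk
    rw [mul_comm k ((k * j).choose k), ← h]
    ring

theorem Nat.choose_mul_choose_mul_sub {k : ℕ} (hk : 0 < k) (l i : ℕ) :
    l.choose i * (k * (l - i)).choose k =
      l * ((l - 1).choose i * (k * (l - i) - 1).choose (k - 1)) := by
  rw [Nat.choose_mul_self_left hk, ← mul_assoc, Nat.choose_mul_sub_self, mul_assoc]

theorem card_filter_meets_every_row (l k m : ℕ) :
    (#{A : Finset (Fin l × Fin k) | #A = m ∧ ∀ i, ∃ j, (i, j) ∈ A} : ℤ) =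
      ∑ i ∈ range (l + 1), (-1 : ℤ) ^ i * l.choose i * (k * (l - i)).choose m := by
  set missesRow : Fin l → Finset (Finset (Fin l × Fin k)) := fun i ↦ {A | ∀ j, (i, j) ∉ A}
  have key := inclusion_exclusion_sum_inf_compl univ missesRow
    (fun A ↦ if #A = m then (1 : ℤ) else 0)
  have hmeets : (univ.inf fun i ↦ (missesRow i)ᶜ) =
      ({A | ∀ i, ∃ j, (i, j) ∈ A} : Finset (Finset (Fin l × Fin k))) := by
    ext A
    simp [missesRow, mem_inf]
  have hmiss (t : Finset (Fin l)) : t.inf missesRow = (tᶜ ×ˢ univ).powerset := by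
    ext A
    simp only [missesRow, mem_inf, mem_filter_univ, mem_powerset, subset_iff, mem_product,
      mem_compl, mem_univ, and_true, Prod.forall]
    exact ⟨fun h i j hij hi ↦ h i hi j hij, fun h i hi j hij ↦ h i j hij hi⟩
  have hcount (t : Finset (Fin l)) :
      ∑ A ∈ t.inf missesRow, (if #A = m then (1 : ℤ) else 0) = (k * (l - #t)).choose m := by
    rw [hmiss, sum_boole, ← powersetCard_eq_filter, card_powersetCard, card_product, card_compl,
      card_univ, Fintype.card_fin, Fintype.card_fin, mul_comm]
  rw [hmeets, sum_boole, filter_filter] at key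
  simp only [hcount, smul_eq_mul] at key
  rw [sum_powerset_apply_card (fun i ↦ (-1 : ℤ) ^ i * (k * (l - i)).choose m)] at key
  simp only [card_univ, Fintype.card_fin, nsmul_eq_mul, and_comm] at key
  rw [key]
  refine sum_congr rfl fun i _ ↦ ?_
  ring

section AlternatingSum

variable {k : ℕ} (hk : 0 < k) (l : ℕ)
include hk

theorem alternating_sum_nonneg :
    0 ≤ ∑ i ∈ range l, (-1 : ℤ) ^ i * l.choose i * (k * (l - i)).choose k := by
  have hcount := card_filter_meets_every_row l k k
  rw [sum_range_succ, Nat.sub_self, mul_zero, Nat.choose_eq_zero_of_lt hk] at hcount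
  simp only [Nat.cast_zero, mul_zero, add_zero] at hcount
  exact hcount ▸ Nat.cast_nonneg _

theorem dvd_alternating_sum :
    (l : ℤ) ∣ ∑ i ∈ range l, (-1 : ℤ) ^ i * l.choose i * (k * (l - i)).choose k := by
  refine dvd_sum fun i _ ↦ ?_
  rw [mul_assoc, ← Nat.cast_mul, Nat.choose_mul_choose_mul_sub hk, Nat.cast_mul]
  exact (dvd_mul_right _ _).mul_left _

end AlternatingSum

theorem stmt_17_general (k l : ℕ) (hk : 2 ≤ k) (hl : 2 ≤ l) :
    (∃ n : ℕ, b k l = (n : ℚ)) ∧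
      (l : ℤ) ∣ ((l : ℤ) - 1) *
        ∑ i ∈ Finset.range l, (-1 : ℤ) ^ i * (l.choose i) * ((k * (l - i)).choose k) := by
  have hk0 : 0 < k := by omega
  obtain ⟨M, hM⟩ := dvd_alternating_sum hk0 l
  have hM0 : 0 ≤ M :=
    nonneg_of_mul_nonneg_right (hM ▸ alternating_sum_nonneg hk0 l) (by omega)
  lift M to ℕ using hM0
  refine ⟨⟨(l - 1) * M, ?_⟩, ⟨(l - 1) * M, by rw [hM]; ring⟩⟩
  have hsum : ∑ i ∈ range l, (-1 : ℚ) ^ i * l.choose i * (k * (l - i)).choose k = l * M := by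
    exact_mod_cast hM
  rw [b, hsum]
  push_cast [Nat.cast_sub (by omega : 1 ≤ l)]
  field_simp

theorem stmt_17 (k l : ℕ) (hk : 2 ≤ k) (hl : 2 ≤ l) (hlk : l ≤ k) :
    (∃ n : ℕ, b k l = (n : ℚ)) ∧
      (l : ℤ) ∣ ((l : ℤ) - 1) *
        ∑ i ∈ Finset.range l, (-1 : ℤ) ^ i * (l.choose i) * ((k * (l - i)).choose k) :=
  stmt_17_general k l hk hl
end
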